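/- arXiv:1106.3769 — 7 statements merged into one kernel-verified Lean document; each statement's English description precedes it below -/
import Mathlib

section
/- Let G be a countable group with the property that for every unitary representation π of G not containing the trivial representation, the first cohomology H¹(G; π) vanishes. Then the abelianization G/[G,G] is finite. -/
/-!
Suppose `Gᵃᵇ` is infinite. Enumerate it and pick nontrivial characters `χₙ : Gᵃᵇ → 𝕋` with
`|χₙ(a) - 1| ≤ 2⁻ⁿ` on its first `n + 1` elements. Such a `χₙ` exists: either these elements
generate a proper subgroup `K`, and any nontrivial character of `Gᵃᵇ / K` will do, or `Gᵃᵇ` is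
finitely generated and infinite, so it has an element of infinite order, hence a homomorphism
`φ : Gᵃᵇ → ℝ` that is nonzero on that element, and `exp (i t φ)` will do for small `t > 0`.
Then `b(g) = (1 - χₙ(g))ₙ` lies in `ℓ²(ℕ)` and is a cocycle for the diagonal unitary
representation `π = ⊕ χₙ`, which has no invariant vectors. A vector `η` with `b = η - π η` would
have to be the all-ones sequence, which is not square summable.
-/

open scoped ENNReal

noncomputable section

section Characters

open Real

variable {A : Type*}

lemma Circle.norm_coe_exp_sub_one_le (r : ℝ) : ‖(Circle.exp r : ℂ) - 1‖ ≤ |r| := by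
  simpa [Circle.coe_exp, mul_comm] using Real.norm_exp_I_mul_ofReal_sub_one_le (x := r)

def ratAddCircleToCircle : AddCircle (1 : ℚ) →+ Additive Circle :=
  QuotientAddGroup.lift _
    (Circle.expHom.comp ((AddMonoidHom.mulLeft (2 * π)).comp (Rat.castHom ℝ).toAddMonoidHom))
    (by
      intro x hx
      obtain ⟨n, rfl⟩ := AddSubgroup.mem_zmultiples_iff.mp hx
      show Circle.exp (2 * π * ((n • (1 : ℚ) : ℚ) : ℝ)) = 1
      simpa using Circle.exp_two_pi_mul_int n)

lemma ratAddCircleToCircle_injective : Function.Injective ratAddCircleToCircle := by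
  refine (injective_iff_map_eq_zero _).mpr fun x hx => ?_
  induction x using QuotientAddGroup.induction_on with | H q => ?_
  obtain ⟨n, hn⟩ := Circle.exp_eq_one.mp hx
  refine (AddCircle.coe_eq_zero_iff 1).mpr ⟨n, ?_⟩
  have : (q : ℝ) = n := mul_left_cancel₀ two_pi_pos.ne' (hn.trans (mul_comm _ _))
  simpa using (by exact_mod_cast this : q = n).symm

lemma exists_addMonoidHom_real_apply_eq_one [AddCommGroup A] {a : A} (ha : ¬IsOfFinAddOrder a) :
    ∃ φ : A →+ ℝ, φ a = 1 := by
  obtain ⟨φ, hφ⟩ := (Module.Baer.of_divisible ℝ).extension_property_addMonoidHom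
    (zmultiplesHom A a) (injective_zsmul_iff_not_isOfFinAddOrder.mpr ha) (Int.castAddHom ℝ)
  exact ⟨φ, by simpa using congr($hφ 1)⟩

lemma exists_circleChar_apply_ne_one [CommGroup A] {a : A} (ha : a ≠ 1) :
    ∃ χ : A →* Circle, χ a ≠ 1 := by
  obtain ⟨c, hc⟩ :=
    CharacterModule.exists_character_apply_ne_zero_of_ne_zero (a := Additive.ofMul a) ha
  refine ⟨MonoidHom.toAdditive.symm (ratAddCircleToCircle.comp c),
    fun h => hc (ratAddCircleToCircle_injective ?_)⟩
  rw [map_zero]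
  exact congr(Additive.ofMul $h)

lemma exists_circleChar_ne_one_of_not_isOfFinOrder [CommGroup A] {a : A} (ha : ¬IsOfFinOrder a)
    (S : Finset A) {ε : ℝ} (hε : 0 < ε) :
    ∃ χ : A →* Circle, χ ≠ 1 ∧ ∀ s ∈ S, ‖(χ s : ℂ) - 1‖ ≤ ε := by
  obtain ⟨φ, hφ⟩ := exists_addMonoidHom_real_apply_eq_one (a := Additive.ofMul a)
    (isOfFinAddOrder_ofMul_iff.not.mpr ha)
  set C := ∑ s ∈ S, |φ (Additive.ofMul s)|
  -- `t ≤ π` keeps `χ a = exp (i t)` away from `1`; `t ≤ ε / (C + 1)` makes `χ` close to `1` on `S`.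
  set t := min π (ε / (C + 1))
  have ht : 0 < t := lt_min pi_pos (by positivity)
  let χ : A →* Circle :=
    { toFun := fun x => Circle.exp (t * φ (Additive.ofMul x))
      map_one' := by simp
      map_mul' := fun x y => by simp [mul_add, Circle.exp_add] }
  refine ⟨χ, DFunLike.ne_iff.mpr ⟨a, ?_⟩, fun s hs => ?_⟩
  · intro h
    obtain ⟨n, hn⟩ := Circle.exp_eq_one.mp (h : Circle.exp (t * φ (Additive.ofMul a)) = 1)
    rw [hφ, mul_one] at hn
    have h0 : (0 : ℝ) < n := by nlinarith [pi_pos]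
    have h1 : (n : ℝ) < 1 := by nlinarith [pi_pos, min_le_left π (ε / (C + 1))]
    have : (0 : ℤ) < n := by exact_mod_cast h0
    have : n < 1 := by exact_mod_cast h1
    omega
  · have hs : |φ (Additive.ofMul s)| ≤ C :=
      Finset.single_le_sum (f := fun s => |φ (Additive.ofMul s)|) (fun _ _ => abs_nonneg _) hs
    calc ‖(Circle.exp (t * φ (Additive.ofMul s)) : ℂ) - 1‖
        ≤ |t * φ (Additive.ofMul s)| := Circle.norm_coe_exp_sub_one_le _
      _ = t * |φ (Additive.ofMul s)| := by rw [abs_mul, abs_of_pos ht]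
      _ ≤ ε / (C + 1) * C := mul_le_mul (min_le_right _ _) hs (abs_nonneg _) (by positivity)
      _ ≤ ε := by rw [div_mul_eq_mul_div, div_le_iff₀ (by positivity)]; nlinarith

lemma exists_circleChar_ne_one_norm_sub_one_le [CommGroup A] [Infinite A] (S : Finset A)
    {ε : ℝ} (hε : 0 < ε) : ∃ χ : A →* Circle, χ ≠ 1 ∧ ∀ s ∈ S, ‖(χ s : ℂ) - 1‖ ≤ ε := by
  by_cases hS : Subgroup.closure (S : Set A) = ⊤
  · have : Group.FG A := Group.fg_iff.mpr ⟨S, hS, S.finite_toSet⟩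
    obtain ⟨a, ha⟩ : ∃ a : A, ¬IsOfFinOrder a := by
      by_contra! h
      exact not_finite_iff_infinite.mpr ‹_› (CommGroup.finite_of_fg_isMulTorsion A h)
    exact exists_circleChar_ne_one_of_not_isOfFinOrder ha S hε
  · set K := Subgroup.closure (S : Set A)
    obtain ⟨a, ha⟩ : ∃ a, a ∉ K := by simpa [Subgroup.eq_top_iff'] using hS
    obtain ⟨χ, hχ⟩ := exists_circleChar_apply_ne_one (a := (a : A ⧸ K))
      (by rwa [Ne, QuotientGroup.eq_one_iff])
    refine ⟨χ.comp (QuotientGroup.mk' K), fun h => hχ congr($h a), fun s hs => ?_⟩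
    have : (s : A ⧸ K) = 1 := (QuotientGroup.eq_one_iff s).mpr (Subgroup.subset_closure hs)
    simp [this, hε.le]

lemma exists_seq_circleChar_ne_one_memℓp [CommGroup A] [Infinite A] [Countable A] :
    ∃ χ : ℕ → A →* Circle, (∀ n, χ n ≠ 1) ∧ ∀ a, Memℓp (fun n => 1 - (χ n a : ℂ)) 2 := by
  classical
  obtain ⟨f, hf⟩ := exists_surjective_nat A
  choose χ hχ hsmall using fun n : ℕ => exists_circleChar_ne_one_norm_sub_one_le
    ((Finset.range (n + 1)).image f) (by positivity : (0 : ℝ) < (1 / 2) ^ n)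
  refine ⟨χ, hχ, fun a => memℓp_gen ?_⟩
  obtain ⟨k, rfl⟩ := hf a
  refine Summable.of_norm_bounded_eventually_nat
    (summable_geometric_of_lt_one (by norm_num : (0 : ℝ) ≤ 1 / 4) (by norm_num)) ?_
  filter_upwards [Filter.eventually_ge_atTop k] with n hn
  have h : ‖1 - (χ n (f k) : ℂ)‖ ≤ (1 / 2) ^ n := by
    rw [norm_sub_rev]
    exact hsmall n _ (Finset.mem_image_of_mem f (Finset.mem_range.mpr (by omega)))
  calc ‖‖1 - (χ n (f k) : ℂ)‖ ^ (2 : ℝ≥0∞).toReal‖ = ‖1 - (χ n (f k) : ℂ)‖ ^ 2 := by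
        simp
    _ ≤ ((1 / 2) ^ n) ^ 2 := by gcongr
    _ = (1 / 4) ^ n := by rw [← pow_mul, mul_comm, pow_mul]; norm_num

end Characters

namespace lp

variable {ι : Type*} {E : ι → Type*} [∀ i, NormedAddCommGroup (E i)] [∀ i, NormedSpace ℂ (E i)]
  {p : ℝ≥0∞} [Fact (1 ≤ p)]

def diagonal (u : ι → Circle) : lp E p →ₗᵢ[ℂ] lp E p where
  toFun x := ⟨fun i => u i • x i, (lp.memℓp x).mono' fun i => by rw [Circle.norm_smul]⟩
  map_add' x y := lp.ext <| funext fun i => smul_add (u i) (x i) (y i)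
  map_smul' c x := lp.ext <| funext fun i => smul_comm (u i) c (x i)
  norm_map' x := by
    have hp : p ≠ 0 := (zero_lt_one.trans_le Fact.out).ne'
    exact le_antisymm (norm_mono hp fun i => (Circle.norm_smul _ _).le)
      (norm_mono hp fun i => (Circle.norm_smul _ _).ge)

lemma diagonal_mul (u v : ι → Circle) (x : lp E p) :
    diagonal (u * v) x = diagonal u (diagonal v x) :=
  lp.ext <| funext fun i => mul_smul (u i) (v i) (x i)

def diagonalUnitary : (ι → Circle) →* (lp E p ≃ₗᵢ[ℂ] lp E p) where
  toFun u := LinearIsometryEquiv.ofSurjective (diagonal u) fun y =>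
    ⟨diagonal u⁻¹ y, by
      rw [← diagonal_mul, mul_inv_cancel]
      exact lp.ext <| funext fun i => one_smul _ _⟩
  map_one' := LinearIsometryEquiv.ext fun x => lp.ext <| funext fun i => one_smul _ _
  map_mul' u v := LinearIsometryEquiv.ext (diagonal_mul u v)

@[simp] lemma diagonalUnitary_apply (u : ι → Circle) (x : lp E p) (i : ι) :
    diagonalUnitary u x i = u i • x i := rfl

end lp

section DiagonalCocycle

open lp

variable {G ι : Type*} [Group G] {E : ι → Type*} [∀ i, NormedAddCommGroup (E i)]
  [∀ i, NormedSpace ℂ (E i)] {p : ℝ≥0∞}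

variable (χ : ι → G →* Circle) (hmem : ∀ g, Memℓp (fun i => 1 - (χ i g : ℂ)) p)

def oneSubCocycle (g : G) : lp (fun _ : ι => ℂ) p := ⟨fun i => 1 - (χ i g : ℂ), hmem g⟩

@[simp] lemma oneSubCocycle_apply (g : G) (i : ι) :
    oneSubCocycle χ hmem g i = 1 - (χ i g : ℂ) := rfl

variable [Fact (1 ≤ p)]

variable {χ} in
lemma eq_zero_of_forall_diagonalUnitary_eq (hχ : ∀ i, χ i ≠ 1)
    {ξ : lp E p} (hξ : ∀ g, diagonalUnitary (MonoidHom.pi χ g) ξ = ξ) : ξ = 0 := by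
  refine lp.ext <| funext fun i => ?_
  obtain ⟨g, hg⟩ := DFunLike.ne_iff.mp (hχ i)
  have h : (χ i g : ℂ) • ξ i = ξ i := congr($(hξ g) i)
  have h' : ((χ i g : ℂ) - 1) • ξ i = 0 := by rw [sub_smul, h, one_smul, sub_self]
  exact (smul_eq_zero.mp h').resolve_left (sub_ne_zero.mpr (Circle.coe_eq_one.not.mpr hg))

lemma oneSubCocycle_mul (g g' : G) :
    oneSubCocycle χ hmem (g * g') =
      oneSubCocycle χ hmem g + diagonalUnitary (MonoidHom.pi χ g) (oneSubCocycle χ hmem g') := by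
  refine lp.ext <| funext fun i => ?_
  simp only [oneSubCocycle_apply, lp.coeFn_add, Pi.add_apply, diagonalUnitary_apply,
    MonoidHom.pi_apply, map_mul, Circle.coe_mul, Circle.smul_def, smul_eq_mul]
  ring

lemma not_exists_oneSubCocycle_eq_sub [Infinite ι] (hp : p ≠ ∞) (hχ : ∀ i, χ i ≠ 1) :
    ¬ ∃ η : lp (fun _ : ι => ℂ) p, ∀ g,
      oneSubCocycle χ hmem g = η - diagonalUnitary (MonoidHom.pi χ g) η := by
  rintro ⟨η, hη⟩
  have hη_one : ∀ i, η i = 1 := fun i => by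
    obtain ⟨g, hg⟩ := DFunLike.ne_iff.mp (hχ i)
    have h : 1 - (χ i g : ℂ) = η i - χ i g * η i := by
      simpa [Circle.smul_def] using congr($(hη g) i)
    have h' : (1 - (χ i g : ℂ)) * (η i - 1) = 0 := by linear_combination -h
    exact sub_eq_zero.mp ((mul_eq_zero.mp h').resolve_left
      (sub_ne_zero.mpr (Ne.symm (Circle.coe_eq_one.not.mpr hg))))
  have hp' : 0 < p.toReal := ENNReal.toReal_pos (zero_lt_one.trans_le Fact.out).ne' hp
  have hsum := (lp.memℓp η).summable hp'
  simp only [hη_one, norm_one, Real.one_rpow] at hsum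
  exact not_finite_iff_infinite.mpr ‹_› (Finite.of_summable_const one_pos hsum)

end DiagonalCocycle

end

/-- If every unitary representation of a countable group `G` without nonzero invariant
vectors has vanishing first cohomology (every 1-cocycle is a coboundary), then the
abelianization of `G` is finite. -/
theorem abelianization_finite_of_vanishing_H1
    {G : Type} [Group G] [Countable G]
    (h : ∀ (E : Type) [NormedAddCommGroup E] [InnerProductSpace ℂ E] [CompleteSpace E]
      (π : G →* (E ≃ₗᵢ[ℂ] E)),
      (∀ ξ : E, (∀ g : G, π g ξ = ξ) → ξ = 0) →
      ∀ b : G → E, (∀ g g' : G, b (g * g') = b g + π g (b g')) →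
        ∃ η : E, ∀ g : G, b g = η - π g η) :
    Finite (Abelianization G) := by
  by_contra hinf
  rw [not_finite_iff_infinite] at hinf
  have : Countable (Abelianization G) :=
    (QuotientGroup.mk_surjective (s := commutator G)).countable
  obtain ⟨χ, hχ, hmem⟩ := exists_seq_circleChar_ne_one_memℓp (A := Abelianization G)
  set ψ : ℕ → G →* Circle := fun n => (χ n).comp Abelianization.of
  have hψ : ∀ n, ψ n ≠ 1 := fun n hn =>
    hχ n (Abelianization.hom_ext _ _ (hn.trans (MonoidHom.one_comp _).symm))
  have hb : ∀ g, Memℓp (fun n => 1 - (ψ n g : ℂ)) 2 := fun g => hmem (Abelianization.of g)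
  obtain ⟨η, hη⟩ := h _ (lp.diagonalUnitary.comp (MonoidHom.pi ψ))
    (fun _ => eq_zero_of_forall_diagonalUnitary_eq hψ) (oneSubCocycle ψ hb)
    (oneSubCocycle_mul ψ hb)
  exact not_exists_oneSubCocycle_eq_sub ψ hb ENNReal.ofNat_ne_top hψ ⟨η, hη⟩
end

section
/- Suppose a countable group G, a subgroup H ≤ G, and a subset U ⊆ G satisfy: (i) U generates G; (ii) hUh⁻¹ ⊆ U for all h ∈ H; (iii) there is N ∈ ℕ such that every element of G is a product of at most N elements of U ∪ H ∪ H⁻¹; (iv) there is C₂ < ∞ such that every quasi-cocycle into any unitary G-representation is bounded on U; (v) G has property (T). Then for every unitary representation π of G with no nonzero invariant vector, every quasi-π-cocycle b: G → ℋ is bounded on G. -/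
/-!
Write `C` for a common bound of the defect of `b` and of `‖b‖` on `U`. Since `H` normalises `U`,
`u h = h (h⁻¹ u h)` with `h⁻¹ u h ∈ U`, so comparing the two quasi-cocycle expansions of
`b (u h)` gives `‖π u (b h) - b h‖ ≤ 4 C` for all `u ∈ U`, `h ∈ H`. As `U` generates `G`, every
`π g` moves the vectors `b h`, `h ∈ H`, by a bounded amount; if `b` were unbounded on `H`, the
normalised vectors `b h / ‖b h‖` would be almost invariant, contradicting property (T). Hence `b`
is bounded on `U ∪ H ∪ H⁻¹`, and by bounded generation on all of `G`.
-/

/-- Kazhdan's property (T). -/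
def HasPropertyT (G : Type) [Group G] : Prop :=
  ∀ (E : Type) [NormedAddCommGroup E] [InnerProductSpace ℂ E] [CompleteSpace E],
    ∀ π : G →* (E ≃ₗᵢ[ℂ] E),
      (∀ ε > (0 : ℝ), ∀ S : Finset G, ∃ ξ : E, ξ ≠ 0 ∧ ∀ s ∈ S, ‖ξ - π s ξ‖ < ε * ‖ξ‖) →
      ∃ ξ : E, ξ ≠ 0 ∧ ∀ g : G, π g ξ = ξ

section QuasiCocycle

variable {G R E : Type*} [Group G] [Semiring R] [SeminormedAddCommGroup E] [Module R E]

def IsQuasiCocycle (π : G →* (E ≃ₗᵢ[R] E)) (b : G → E) (D : ℝ) : Prop :=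
  ∀ g g' : G, ‖b (g * g') - b g - π g (b g')‖ ≤ D

namespace IsQuasiCocycle

variable {π : G →* (E ≃ₗᵢ[R] E)} {b : G → E} {D : ℝ}

theorem norm_apply_one_le (hb : IsQuasiCocycle π b D) : ‖b 1‖ ≤ D := by
  simpa using hb 1 1

theorem nonneg (hb : IsQuasiCocycle π b D) : 0 ≤ D :=
  (norm_nonneg _).trans hb.norm_apply_one_le

theorem norm_apply_mul_le (hb : IsQuasiCocycle π b D) (g g' : G) :
    ‖b (g * g')‖ ≤ ‖b g‖ + ‖b g'‖ + D := by
  calc ‖b (g * g')‖ = ‖(b (g * g') - b g - π g (b g')) + b g + π g (b g')‖ := by abel_nf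
    _ ≤ ‖b (g * g') - b g - π g (b g')‖ + ‖b g‖ + ‖π g (b g')‖ := norm_add₃_le
    _ ≤ ‖b g‖ + ‖b g'‖ + D := by rw [LinearIsometryEquiv.norm_map]; linarith [hb g g']

theorem norm_apply_inv_le (hb : IsQuasiCocycle π b D) (g : G) :
    ‖b g⁻¹‖ ≤ ‖b g‖ + 2 * D := by
  have hsplit : π g (b g⁻¹) = (b 1 - b g) - (b (g * g⁻¹) - b g - π g (b g⁻¹)) := by
    rw [mul_inv_cancel]; abel
  calc ‖b g⁻¹‖ = ‖π g (b g⁻¹)‖ := (LinearIsometryEquiv.norm_map _ _).symm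
    _ ≤ ‖b 1‖ + ‖b g‖ + D := by
        rw [hsplit]; exact (norm_sub_le _ _).trans (add_le_add (norm_sub_le _ _) (hb g g⁻¹))
    _ ≤ ‖b g‖ + 2 * D := by linarith [hb.norm_apply_one_le]

theorem norm_list_prod_le (hb : IsQuasiCocycle π b D) {B : ℝ} :
    ∀ l : List G, (∀ x ∈ l, ‖b x‖ ≤ B) → ‖b l.prod‖ ≤ D + l.length * (B + D)
  | [], _ => by simpa using hb.norm_apply_one_le
  | x :: l, hl => by
    have hx := hl x List.mem_cons_self
    have ih := hb.norm_list_prod_le l fun y hy => hl y (List.mem_cons_of_mem _ hy)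
    rw [List.prod_cons, List.length_cons, Nat.cast_succ]
    linarith [hb.norm_apply_mul_le x l.prod]

theorem exists_bound_of_boundedGeneration (hb : IsQuasiCocycle π b D) {T : Set G} {B : ℝ}
    (hT : ∀ x ∈ T, ‖b x‖ ≤ B) {N : ℕ}
    (hgen : ∀ g : G, ∃ l : List G, l.length ≤ N ∧ (∀ x ∈ l, x ∈ T) ∧ l.prod = g) :
    ∃ M : ℝ, ∀ g : G, ‖b g‖ ≤ M := by
  refine ⟨D + N * (max B 0 + D), fun g => ?_⟩
  obtain ⟨l, hlen, hmem, rfl⟩ := hgen g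
  have hBD : 0 ≤ max B 0 + D := add_nonneg (le_max_right _ _) hb.nonneg
  calc ‖b l.prod‖ ≤ D + l.length * (max B 0 + D) :=
        hb.norm_list_prod_le l fun x hx => (hT x (hmem x hx)).trans (le_max_left _ _)
    _ ≤ D + N * (max B 0 + D) := by gcongr

/-- The conjugation trick: write `u h = h (h⁻¹ u h)` and expand `b (u h)` in both ways. -/
theorem norm_map_apply_sub_le (hb : IsQuasiCocycle π b D) (u h : G) :
    ‖π u (b h) - b h‖ ≤ ‖b u‖ + ‖b (h⁻¹ * u * h)‖ + 2 * D := by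
  have hw : h * (h⁻¹ * u * h) = u * h := by group
  set w := h⁻¹ * u * h
  have hsplit : π u (b h) - b h = (b (h * w) - b h - π h (b w))
      + -(b (u * h) - b u - π u (b h)) + π h (b w) + -b u := by
    rw [hw]; abel
  calc ‖π u (b h) - b h‖
      ≤ ‖b (h * w) - b h - π h (b w)‖ + ‖-(b (u * h) - b u - π u (b h))‖ + ‖π h (b w)‖ + ‖-b u‖ :=
        hsplit ▸ norm_add₄_le ..
    _ ≤ ‖b u‖ + ‖b w‖ + 2 * D := by
        rw [norm_neg, norm_neg, LinearIsometryEquiv.norm_map]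
        linarith [hb h w, hb u h]

end IsQuasiCocycle

end QuasiCocycle

section Displacement

variable {G R E ι : Type*} [Group G] [Semiring R] [SeminormedAddCommGroup E] [Module R E]
  (π : G →* (E ≃ₗᵢ[R] E))

theorem norm_map_mul_apply_sub_le (g g' : G) (ξ : E) :
    ‖π (g * g') ξ - ξ‖ ≤ ‖π g ξ - ξ‖ + ‖π g' ξ - ξ‖ := by
  calc ‖π (g * g') ξ - ξ‖ ≤ ‖π g (π g' ξ) - π g ξ‖ + ‖π g ξ - ξ‖ := by
        rw [map_mul]; exact norm_sub_le_norm_sub_add_norm_sub _ _ _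
    _ = ‖π g ξ - ξ‖ + ‖π g' ξ - ξ‖ := by
        rw [← LinearIsometryEquiv.map_sub, LinearIsometryEquiv.norm_map, add_comm]

theorem norm_map_inv_apply_sub (g : G) (ξ : E) : ‖π g⁻¹ ξ - ξ‖ = ‖π g ξ - ξ‖ := by
  have hcancel : π g (π g⁻¹ ξ) = ξ := by rw [map_inv]; exact (π g).apply_symm_apply ξ
  rw [← LinearIsometryEquiv.norm_map (π g), LinearIsometryEquiv.map_sub, hcancel, norm_sub_rev]

def boundedDisplacement (ξ : ι → E) : Subgroup G where
  carrier := {g | ∃ c : ℝ, ∀ i, ‖π g (ξ i) - ξ i‖ ≤ c}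
  one_mem' := ⟨0, fun i => by simp⟩
  mul_mem' := by
    rintro g g' ⟨c, hc⟩ ⟨c', hc'⟩
    exact ⟨c + c', fun i =>
      (norm_map_mul_apply_sub_le π g g' (ξ i)).trans (add_le_add (hc i) (hc' i))⟩
  inv_mem' := by
    rintro g ⟨c, hc⟩
    exact ⟨c, fun i => (norm_map_inv_apply_sub π g (ξ i)).trans_le (hc i)⟩

variable {π}

theorem exists_almostInvariant_of_boundedDisplacement {ξ : ι → E}
    (hdisp : ∀ g, g ∈ boundedDisplacement π ξ) (hunb : ∀ M : ℝ, ∃ i, M < ‖ξ i‖)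
    {ε : ℝ} (hε : 0 < ε) (S : Finset G) :
    ∃ v : E, v ≠ 0 ∧ ∀ s ∈ S, ‖v - π s v‖ < ε * ‖v‖ := by
  choose c hc using hdisp
  obtain ⟨i, hi⟩ := hunb ((∑ s ∈ S, max (c s) 0) / ε)
  have hpos : 0 < ‖ξ i‖ :=
    (div_nonneg (Finset.sum_nonneg fun s _ => le_max_right _ _) hε.le).trans_lt hi
  refine ⟨ξ i, fun h0 => by simp [h0] at hpos, fun s hs => ?_⟩
  calc ‖ξ i - π s (ξ i)‖ = ‖π s (ξ i) - ξ i‖ := norm_sub_rev _ _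
    _ ≤ max (c s) 0 := (hc s i).trans (le_max_left _ _)
    _ ≤ ∑ s ∈ S, max (c s) 0 := Finset.single_le_sum (fun s _ => le_max_right _ _) hs
    _ < ε * ‖ξ i‖ := by rwa [div_lt_iff₀' hε] at hi

end Displacement

theorem exists_bound_of_boundedDisplacement {G : Type} [Group G] (hT : HasPropertyT G)
    {E : Type} [NormedAddCommGroup E] [InnerProductSpace ℂ E] [CompleteSpace E]
    {π : G →* (E ≃ₗᵢ[ℂ] E)} (hπ : ∀ ξ : E, (∀ g : G, π g ξ = ξ) → ξ = 0)
    {ι : Type*} {ξ : ι → E} (hdisp : ∀ g, g ∈ boundedDisplacement π ξ) :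
    ∃ M : ℝ, ∀ i, ‖ξ i‖ ≤ M := by
  by_contra! hunb
  obtain ⟨v, hv, hinv⟩ :=
    hT E π fun _ hε S => exists_almostInvariant_of_boundedDisplacement hdisp hunb hε S
  exact hv (hπ v hinv)

theorem quasicocycle_bounded_of_triple_general
    {G : Type} [Group G]
    (H : Subgroup G) (U : Set G)
    (hgen : Subgroup.closure U = ⊤)
    (hconj : ∀ h ∈ H, ∀ u ∈ U, h * u * h⁻¹ ∈ U)
    (N : ℕ)
    (hbg : ∀ g : G, ∃ l : List G, l.length ≤ N ∧
      (∀ x ∈ l, x ∈ U ∪ (H : Set G) ∪ (H : Set G)⁻¹) ∧ l.prod = g)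
    (hrelTT : ∀ (E : Type) [NormedAddCommGroup E] [InnerProductSpace ℂ E] [CompleteSpace E]
      (π : G →* (E ≃ₗᵢ[ℂ] E)) (b : G → E),
      (∃ D : ℝ, ∀ g g' : G, ‖b (g * g') - b g - π g (b g')‖ ≤ D) →
      ∃ C₂ : ℝ, ∀ u ∈ U, ‖b u‖ ≤ C₂)
    (hT : HasPropertyT G)
    (E : Type) [NormedAddCommGroup E] [InnerProductSpace ℂ E] [CompleteSpace E]
    (π : G →* (E ≃ₗᵢ[ℂ] E))
    (hπ : ∀ ξ : E, (∀ g : G, π g ξ = ξ) → ξ = 0)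
    (b : G → E)
    (hb : ∃ D : ℝ, ∀ g g' : G, ‖b (g * g') - b g - π g (b g')‖ ≤ D) :
    ∃ M : ℝ, ∀ g : G, ‖b g‖ ≤ M := by
  obtain ⟨D, hD⟩ := hb
  have hqc : IsQuasiCocycle π b D := hD
  obtain ⟨C, hC⟩ := hrelTT E π b ⟨D, hD⟩
  have hU : U ⊆ boundedDisplacement π fun h : H => b h := fun u hu =>
    ⟨C + C + 2 * D, fun ⟨h, hh⟩ => (hqc.norm_map_apply_sub_le u h).trans <| by
      have := hC _ (by simpa using hconj h⁻¹ (inv_mem hh) u hu)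
      linarith [hC u hu]⟩
  rw [← Subgroup.closure_le, hgen] at hU
  obtain ⟨C₃, hC₃⟩ := exists_bound_of_boundedDisplacement hT hπ fun g => hU trivial
  refine hqc.exists_bound_of_boundedGeneration (B := max C (C₃ + 2 * D)) ?_ hbg
  rintro x ((hx | hx) | hx)
  · exact (hC x hx).trans (le_max_left _ _)
  · exact (hC₃ ⟨x, hx⟩).trans (by linarith [le_max_right C (C₃ + 2 * D), hqc.nonneg])
  · have hinv := hqc.norm_apply_inv_le x⁻¹
    rw [inv_inv] at hinv
    linarith [(hC₃ ⟨x⁻¹, hx⟩ : ‖b x⁻¹‖ ≤ C₃), le_max_right C (C₃ + 2 * D)]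

/-- Suppose `(G, H, U)` satisfy: (i) `U` generates `G`; (ii) `U` is invariant under
conjugation by `H`; (iii) bounded generation by `U ∪ H ∪ H⁻¹`; (iv) every quasi-cocycle
into any unitary `G`-representation is bounded on `U`; (v) `G` has property (T). Then for
every unitary representation `π` with no nonzero invariant vector, every quasi-`π`-cocycle
is bounded on `G`. -/
theorem quasicocycle_bounded_of_triple
    {G : Type} [Group G] [Countable G]
    (H : Subgroup G) (U : Set G)
    (hgen : Subgroup.closure U = ⊤)
    (hconj : ∀ h ∈ H, ∀ u ∈ U, h * u * h⁻¹ ∈ U)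
    (N : ℕ)
    (hbg : ∀ g : G, ∃ l : List G, l.length ≤ N ∧
      (∀ x ∈ l, x ∈ U ∪ (H : Set G) ∪ (H : Set G)⁻¹) ∧ l.prod = g)
    (hrelTT : ∀ (E : Type) [NormedAddCommGroup E] [InnerProductSpace ℂ E] [CompleteSpace E]
      (π : G →* (E ≃ₗᵢ[ℂ] E)) (b : G → E),
      (∃ D : ℝ, ∀ g g' : G, ‖b (g * g') - b g - π g (b g')‖ ≤ D) →
      ∃ C₂ : ℝ, ∀ u ∈ U, ‖b u‖ ≤ C₂)
    (hT : HasPropertyT G)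
    (E : Type) [NormedAddCommGroup E] [InnerProductSpace ℂ E] [CompleteSpace E]
    (π : G →* (E ≃ₗᵢ[ℂ] E))
    (hπ : ∀ ξ : E, (∀ g : G, π g ξ = ξ) → ξ = 0)
    (b : G → E)
    (hb : ∃ D : ℝ, ∀ g g' : G, ‖b (g * g') - b g - π g (b g')‖ ≤ D) :
    ∃ M : ℝ, ∀ g : G, ‖b g‖ ≤ M :=
  quasicocycle_bounded_of_triple_general H U hgen hconj N hbg hrelTT hT E π hπ b hb
end

section
/- Let A be a commutative ring and m ≥ 3. For g ∈ SL_m(A), distinct indices i ≠ j, and a ∈ A, let v ∈ A^m be the i-th column of g, w ∈ A^m be a times the j-th row of g⁻¹ (viewed as a row vector), and let (g₁,…,g_m) be the i-th row of g⁻¹. Then Σ_l g_l v_l = 1 and Σ_l w_l v_l = 0, and setting b_{l,n} = w_l g_n − w_n g_l one has w = Σ_{l<n} b_{l,n}(v_n e_l − v_l e_n), where e_l denotes the l-th standard basis row vector. Consequently g·E_{i,j}(a)·g⁻¹ = I_m + v·w = ∏_{l<n} (I_m + v·b_{l,n}(v_n e_l − v_l e_n)), where the factors in the product pairwise commute. 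-/
/-!
Contracting the alternating tensor `w ∧ gᵢ` (whose coefficients are the `b_{l,n}`) with `v`
gives `(gᵢ ⬝ᵥ v) • w - (w ⬝ᵥ v) • gᵢ = w`, which is the expansion of `w`. Every factor is
`1 + vecMulVec v c` with `c ⬝ᵥ v = 0`, and any two such rank-one matrices multiply to zero,
so the factors commute and their product is `1 + vecMulVec v (∑ c) = 1 + vecMulVec v w`.
-/

open Matrix

theorem Finset.sum_sum_ite_lt_add_swap {ι M : Type*} [Fintype ι] [LinearOrder ι]
    [AddCommMonoid M] (f : ι → ι → M) (hf : ∀ l, f l l = 0) :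
    ∑ l, ∑ n, (if l < n then f l n + f n l else 0) = ∑ l, ∑ n, f l n := by
  simp only [ite_add_zero, Finset.sum_add_distrib]
  rw [Finset.sum_comm (f := fun l n => if l < n then f n l else 0), ← Finset.sum_add_distrib]
  refine Finset.sum_congr rfl fun l _ => ?_
  rw [← Finset.sum_add_distrib]
  refine Finset.sum_congr rfl fun n _ => ?_
  rcases lt_trichotomy l n with h | rfl | h
  · simp [h, h.not_gt]
  · simp [hf]
  · simp [h, h.not_gt]

section SkewPairs

variable {ι R : Type*} [Fintype ι] [CommRing R]

theorem skewPair_dotProduct_self [DecidableEq ι] (b : R) (v : ι → R) (l n : ι) :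
    (fun q => b * (v n * (Pi.single l 1 : ι → R) q - v l * (Pi.single n 1 : ι → R) q))
      ⬝ᵥ v = 0 := by
  simp only [dotProduct, mul_sub, sub_mul, Finset.sum_sub_distrib, Pi.single_apply, mul_ite,
    mul_one, mul_zero, ite_mul, zero_mul, Finset.sum_ite_eq', Finset.mem_univ, if_true]
  ring

theorem sum_lt_wedge_mul_skewPair [LinearOrder ι] (x y v : ι → R) (b : ι → ι → R)
    (hb : ∀ l n, b l n = x l * y n - x n * y l) (q : ι) :
    ∑ l, ∑ n, (if l < n then
      b l n * (v n * (Pi.single l 1 : ι → R) q - v l * (Pi.single n 1 : ι → R) q) else 0)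
      = (y ⬝ᵥ v) * x q - (x ⬝ᵥ v) * y q := by
  have hswap (l n : ι) :
      b l n * (v n * (Pi.single l 1 : ι → R) q - v l * (Pi.single n 1 : ι → R) q)
        = b l n * v n * (Pi.single l 1 : ι → R) q
          + b n l * v l * (Pi.single n 1 : ι → R) q := by
    rw [hb, hb]; ring
  simp_rw [hswap]
  calc _ = ∑ l, (∑ n, b l n * v n) * (Pi.single l 1 : ι → R) q := by
        rw [Finset.sum_sum_ite_lt_add_swap _ fun l => by simp [hb]]
        simp only [Finset.sum_mul]
    _ = ∑ n, b q n * v n := by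
        simp only [Pi.single_apply, mul_ite, mul_one, mul_zero, Finset.sum_ite_eq,
          Finset.mem_univ, if_true]
    _ = _ := by
        rw [dotProduct, dotProduct, Finset.sum_mul, Finset.sum_mul, ← Finset.sum_sub_distrib]
        exact Finset.sum_congr rfl fun n _ => by rw [hb]; ring

end SkewPairs

theorem commute_one_add_of_mul_eq_zero {R : Type*} [Ring R] {M N : R} (hMN : M * N = 0)
    (hNM : N * M = 0) : Commute (1 + M) (1 + N) :=
  (Commute.one_right _).add_right ((Commute.one_left N).add_left (hMN.trans hNM.symm))

theorem Finset.noncommProd_one_add_of_mul_eq_zero {ι R : Type*} [Ring R] (s : Finset ι)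
    (M : ι → R) (hM : ∀ p ∈ s, ∀ q ∈ s, M p * M q = 0)
    (comm : (s : Set ι).Pairwise fun p q => Commute (1 + M p) (1 + M q)) :
    s.noncommProd (fun p => 1 + M p) comm = 1 + ∑ p ∈ s, M p := by
  classical
  induction s using Finset.induction_on with
  | empty => simp
  | insert x s hx ih =>
    rw [Finset.noncommProd_insert_of_notMem _ _ _ _ hx,
      ih (fun p hp q hq => hM p (by simp [hp]) q (by simp [hq])), Finset.sum_insert hx,
      one_add_mul, mul_one_add, Finset.mul_sum,
      Finset.sum_eq_zero fun p hp => hM x (by simp) p (by simp [hp])]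
    abel

namespace Matrix

variable {n R : Type*}

theorem vecMulVec_sum [NonUnitalNonAssocSemiring R] {ι : Type*} (v : n → R) (s : Finset ι)
    (c : ι → n → R) : vecMulVec v (∑ p ∈ s, c p) = ∑ p ∈ s, vecMulVec v (c p) := by
  ext k l
  simp only [vecMulVec_apply, Finset.sum_apply, Matrix.sum_apply, Finset.mul_sum]

theorem vecMulVec_mul_vecMulVec_eq_zero [Fintype n] [NonUnitalSemiring R]
    (v c c' : n → R) (hc : c ⬝ᵥ v = 0) : vecMulVec v c * vecMulVec v c' = 0 := by
  rw [vecMulVec_mul_vecMulVec, hc, zero_smul, vecMulVec_zero]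

theorem single_eq_vecMulVec_single [DecidableEq n] [MulZeroOneClass R] (i j : n) (a : R) :
    single i j a = vecMulVec (Pi.single i 1) (Pi.single j a) := by
  ext k l
  simp [-mul_ite, single, vecMulVec, ite_and, Pi.single_apply, eq_comm]

theorem mul_one_add_single_mul [Fintype n] [DecidableEq n] [Semiring R] {G H : Matrix n n R}
    (hGH : G * H = 1) (i j : n) (a : R) :
    G * (1 + single i j a) * H = 1 + vecMulVec (G.col i) (a • H.row j) := by
  rw [mul_add, mul_one, add_mul, hGH, single_eq_vecMulVec_single, mul_vecMulVec, vecMulVec_mul,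
    mulVec_single_one, single_vecMul]

end Matrix

theorem suslin_factorization_general
    {A : Type} [CommRing A] {m : ℕ}
    (g : Matrix.SpecialLinearGroup (Fin m) A) (i j : Fin m) (hij : i ≠ j) (a : A)
    (v w gi : Fin m → A) (bfun : Fin m → Fin m → A)
    (hv : ∀ l, v l = (g : Matrix (Fin m) (Fin m) A) l i)
    (hw : ∀ l, w l = a * ((g⁻¹ : Matrix.SpecialLinearGroup (Fin m) A) :
        Matrix (Fin m) (Fin m) A) j l)
    (hgi : ∀ l, gi l = ((g⁻¹ : Matrix.SpecialLinearGroup (Fin m) A) :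
        Matrix (Fin m) (Fin m) A) i l)
    (hb : ∀ l n, bfun l n = w l * gi n - w n * gi l)
    (F : Fin m × Fin m → Matrix (Fin m) (Fin m) A)
    (hF : ∀ p : Fin m × Fin m, F p = 1 + Matrix.vecMulVec v
      (fun q => bfun p.1 p.2 * (v p.2 * (Pi.single p.1 1 : Fin m → A) q -
        v p.1 * (Pi.single p.2 1 : Fin m → A) q))) :
    (∑ l, gi l * v l = 1) ∧
    (∑ l, w l * v l = 0) ∧
    (∀ q : Fin m, w q = ∑ l, ∑ n, if l < n then
      bfun l n * (v n * (Pi.single l 1 : Fin m → A) q - v l * (Pi.single n 1 : Fin m → A) q) else 0) ∧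
    ((g : Matrix (Fin m) (Fin m) A) * (1 + Matrix.single i j a) *
        ((g⁻¹ : Matrix.SpecialLinearGroup (Fin m) A) : Matrix (Fin m) (Fin m) A) =
      1 + Matrix.vecMulVec v w) ∧
    (∃ comm : ((Finset.univ.filter (fun p : Fin m × Fin m => p.1 < p.2) : Finset _) :
        Set (Fin m × Fin m)).Pairwise (fun p q => Commute (F p) (F q)),
      (g : Matrix (Fin m) (Fin m) A) * (1 + Matrix.single i j a) *
          ((g⁻¹ : Matrix.SpecialLinearGroup (Fin m) A) : Matrix (Fin m) (Fin m) A) =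
        (Finset.univ.filter (fun p : Fin m × Fin m => p.1 < p.2)).noncommProd F comm) := by
  set G : Matrix (Fin m) (Fin m) A := (g : Matrix (Fin m) (Fin m) A)
  set H : Matrix (Fin m) (Fin m) A :=
    ((g⁻¹ : SpecialLinearGroup (Fin m) A) : Matrix (Fin m) (Fin m) A)
  have hHG : H * G = 1 := congrArg Subtype.val (inv_mul_cancel g)
  have hGH : G * H = 1 := congrArg Subtype.val (mul_inv_cancel g)
  have hgiv : gi ⬝ᵥ v = 1 := calc
    gi ⬝ᵥ v = (H * G) i i := by simp only [dotProduct, mul_apply, hgi, hv]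
    _ = 1 := by rw [hHG, one_apply_eq]
  have hwv : w ⬝ᵥ v = 0 := calc
    w ⬝ᵥ v = a * (H * G) j i := by
      simp only [dotProduct, mul_apply, hw, hv, Finset.mul_sum, mul_assoc]
    _ = 0 := by rw [hHG, one_apply_ne hij.symm, mul_zero]
  have hw_expand (q : Fin m) : w q = ∑ l, ∑ n, if l < n then
      bfun l n * (v n * (Pi.single l 1 : Fin m → A) q - v l * (Pi.single n 1 : Fin m → A) q)
      else 0 := by
    rw [sum_lt_wedge_mul_skewPair w gi v bfun hb q, hgiv, hwv]; ring
  have hconj : G * (1 + single i j a) * H = 1 + vecMulVec v w := by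
    rw [mul_one_add_single_mul hGH, show v = G.col i from funext hv,
      show w = a • H.row j from funext hw]
  let c (p : Fin m × Fin m) (k : Fin m) : A := bfun p.1 p.2 *
    (v p.2 * (Pi.single p.1 1 : Fin m → A) k - v p.1 * (Pi.single p.2 1 : Fin m → A) k)
  obtain rfl : F = fun p => 1 + vecMulVec v (c p) := funext hF
  have hnil (p q : Fin m × Fin m) : vecMulVec v (c p) * vecMulVec v (c q) = 0 :=
    vecMulVec_mul_vecMulVec_eq_zero _ _ _ (skewPair_dotProduct_self _ _ _ _)
  refine ⟨hgiv, hwv, hw_expand, hconj,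
    fun p _ q _ _ => commute_one_add_of_mul_eq_zero (hnil p q) (hnil q p), ?_⟩
  calc G * (1 + single i j a) * H = 1 + vecMulVec v w := hconj
    _ = 1 + ∑ p ∈ Finset.univ.filter (fun p : Fin m × Fin m => p.1 < p.2),
        vecMulVec v (c p) := by
      rw [← vecMulVec_sum]
      congr 2
      funext q
      rw [hw_expand q, Finset.sum_apply, Finset.sum_filter, Fintype.sum_prod_type]
    _ = _ := (Finset.noncommProd_one_add_of_mul_eq_zero _ _ (fun p _ q _ => hnil p q) _).symm

/-- Suslin's factorization: for `g ∈ SL_m(A)`, `i ≠ j`, `a ∈ A`, with `v` the `i`-th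
column of `g`, `w` equal to `a` times the `j`-th row of `g⁻¹`, and `(g₁,…,g_m)` the `i`-th
row of `g⁻¹`: one has `Σ g_l v_l = 1`, `Σ w_l v_l = 0`, the expansion
`w = Σ_{l<n} b_{l,n}(v_n e_l − v_l e_n)` with `b_{l,n} = w_l g_n − w_n g_l`, and
`g E_{i,j}(a) g⁻¹ = I + v·w = ∏_{l<n} (I + v·b_{l,n}(v_n e_l − v_l e_n))` with the
factors pairwise commuting. -/
theorem suslin_factorization
    {A : Type} [CommRing A] {m : ℕ} (hm : 3 ≤ m)
    (g : Matrix.SpecialLinearGroup (Fin m) A) (i j : Fin m) (hij : i ≠ j) (a : A)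
    (v w gi : Fin m → A) (bfun : Fin m → Fin m → A)
    (hv : ∀ l, v l = (g : Matrix (Fin m) (Fin m) A) l i)
    (hw : ∀ l, w l = a * ((g⁻¹ : Matrix.SpecialLinearGroup (Fin m) A) :
        Matrix (Fin m) (Fin m) A) j l)
    (hgi : ∀ l, gi l = ((g⁻¹ : Matrix.SpecialLinearGroup (Fin m) A) :
        Matrix (Fin m) (Fin m) A) i l)
    (hb : ∀ l n, bfun l n = w l * gi n - w n * gi l)
    (F : Fin m × Fin m → Matrix (Fin m) (Fin m) A)
    (hF : ∀ p : Fin m × Fin m, F p = 1 + Matrix.vecMulVec v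
      (fun q => bfun p.1 p.2 * (v p.2 * (Pi.single p.1 1 : Fin m → A) q -
        v p.1 * (Pi.single p.2 1 : Fin m → A) q))) :
    (∑ l, gi l * v l = 1) ∧
    (∑ l, w l * v l = 0) ∧
    (∀ q : Fin m, w q = ∑ l, ∑ n, if l < n then
      bfun l n * (v n * (Pi.single l 1 : Fin m → A) q - v l * (Pi.single n 1 : Fin m → A) q) else 0) ∧
    ((g : Matrix (Fin m) (Fin m) A) * (1 + Matrix.single i j a) *
        ((g⁻¹ : Matrix.SpecialLinearGroup (Fin m) A) : Matrix (Fin m) (Fin m) A) =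
      1 + Matrix.vecMulVec v w) ∧
    (∃ comm : ((Finset.univ.filter (fun p : Fin m × Fin m => p.1 < p.2) : Finset _) :
        Set (Fin m × Fin m)).Pairwise (fun p q => Commute (F p) (F q)),
      (g : Matrix (Fin m) (Fin m) A) * (1 + Matrix.single i j a) *
          ((g⁻¹ : Matrix.SpecialLinearGroup (Fin m) A) : Matrix (Fin m) (Fin m) A) =
        (Finset.univ.filter (fun p : Fin m × Fin m => p.1 < p.2)).noncommProd F comm) :=
  suslin_factorization_general g i j hij a v w gi bfun hv hw hgi hb F hF
end

section
/- Let B be a uniformly convex Banach space, G a group, and ρ an isometric linear representation of G on B. If there exists ξ ∈ B with sup_{g∈G} ‖ξ − ρ(g)ξ‖ < ‖ξ‖, then B has a nonzero ρ(G)-invariant vector. -/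
/-! The function `r x = sup_g ‖x - ρ g ξ‖` is invariant under `ρ`. By uniform convexity, the
midpoint of two points that are far apart but both nearly minimize `r` has strictly smaller
`r`-value than either, so the sublevel sets of `r` shrink to a point; by completeness `r` has a
unique minimizer (the Chebyshev center of the orbit), which is therefore `ρ`-fixed. It is nonzero
because `r ξ ≤ C < ‖ξ‖ = r 0`. -/

open Set Filter Topology Bornology

def HasShrinkingSublevels {X : Type*} [PseudoMetricSpace X] (φ : X → ℝ) : Prop :=
  ∀ ε > 0, ∃ θ > 0, ∀ x y, φ x ≤ (⨅ z, φ z) + θ → φ y ≤ (⨅ z, φ z) + θ → dist x y < ε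

section Minimizer

variable {X : Type*} [PseudoMetricSpace X] {φ : X → ℝ}

theorem HasShrinkingSublevels.exists_forall_le [CompleteSpace X] [Nonempty X]
    (hφ : HasShrinkingSublevels φ) (hcont : Continuous φ) (hbdd : BddBelow (range φ)) :
    ∃ x, ∀ y, φ x ≤ φ y := by
  set m := ⨅ z, φ z
  have hlt (n : ℕ) : ∃ x, φ x < m + 1 / (n + 1) :=
    exists_lt_of_ciInf_lt (lt_add_of_pos_right m (by positivity))
  choose u hu using hlt
  have hφu : Tendsto (φ ∘ u) atTop (𝓝 m) := by
    refine tendsto_of_tendsto_of_tendsto_of_le_of_le tendsto_const_nhds ?_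
      (fun n => ciInf_le hbdd (u n)) (fun n => (hu n).le)
    simpa using (tendsto_const_nhds (x := m)).add tendsto_one_div_add_atTop_nhds_zero_nat
  have hu_cauchy : CauchySeq u := Metric.cauchySeq_iff.2 fun ε hε => by
    obtain ⟨θ, hθ, hsmall⟩ := hφ ε hε
    obtain ⟨N, hN⟩ := eventually_atTop.1 (hφu.eventually (eventually_le_nhds
      (lt_add_of_pos_right m hθ)))
    exact ⟨N, fun a ha b hb => hsmall _ _ (hN a ha) (hN b hb)⟩
  obtain ⟨x, hx⟩ := cauchySeq_tendsto_of_complete hu_cauchy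
  have hφx : φ x = m := tendsto_nhds_unique ((hcont.tendsto x).comp hx) hφu
  exact ⟨x, fun y => hφx ▸ ciInf_le hbdd y⟩

theorem HasShrinkingSublevels.eq_of_forall_le {X : Type*} [MetricSpace X] {φ : X → ℝ}
    (hφ : HasShrinkingSublevels φ)
    {x y : X} (hx : ∀ z, φ x ≤ φ z) (hy : ∀ z, φ y ≤ φ z) : x = y := by
  have : Nonempty X := ⟨x⟩
  have hx' : φ x ≤ ⨅ z, φ z := le_ciInf hx
  have hy' : φ y ≤ ⨅ z, φ z := le_ciInf hy
  refine dist_le_zero.1 (le_of_forall_gt fun ε hε => ?_)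
  obtain ⟨θ, hθ, hsmall⟩ := hφ ε hε
  exact hsmall x y (by linarith) (by linarith)

end Minimizer

theorem exists_forall_norm_add_le_two_sub_mul {E : Type*} [SeminormedAddCommGroup E]
    [NormedSpace ℝ E] [UniformConvexSpace E] {ε : ℝ} (hε : 0 < ε) :
    ∃ δ > 0, ∀ {R : ℝ} {x y : E}, ‖x‖ ≤ R → ‖y‖ ≤ R → ε * R ≤ ‖x - y‖ →
      ‖x + y‖ ≤ (2 - δ) * R := by
  obtain ⟨δ, hδ, hunit⟩ := exists_forall_closed_ball_dist_add_le_two_sub E hε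
  refine ⟨δ, hδ, fun {R x y} hx hy hxy => ?_⟩
  obtain hR | hR := (norm_nonneg x |>.trans hx).eq_or_lt
  · subst hR
    linarith [norm_add_le x y]
  have hscale {z : E} (hz : ‖z‖ ≤ R) : ‖R⁻¹ • z‖ ≤ 1 := by
    rw [norm_smul, norm_inv, Real.norm_of_nonneg hR.le]
    exact inv_mul_le_one_of_le₀ hz hR.le
  have key := hunit (hscale hx) (hscale hy) (by
    rw [← smul_sub, norm_smul, norm_inv, Real.norm_of_nonneg hR.le]
    exact (le_inv_mul_iff₀ hR).2 (by linarith))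
  rw [← smul_add, norm_smul, norm_inv, Real.norm_of_nonneg hR.le, inv_mul_le_iff₀ hR] at key
  linarith

section FarthestDist

variable {E ι : Type*} [SeminormedAddCommGroup E] {f : ι → E}

noncomputable def farthestDist (f : ι → E) (x : E) : ℝ :=
  ⨆ i, ‖x - f i‖

theorem bddAbove_range_norm_sub (hf : IsBounded (range f)) (x : E) :
    BddAbove (range fun i => ‖x - f i‖) := by
  obtain ⟨c, hc⟩ := isBounded_iff_forall_norm_le.1 hf
  refine ⟨‖x‖ + c, forall_mem_range.2 fun i => ?_⟩
  exact (norm_sub_le _ _).trans (add_le_add_right (hc _ (mem_range_self i)) _)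

theorem norm_sub_le_farthestDist (hf : IsBounded (range f)) (x : E) (i : ι) :
    ‖x - f i‖ ≤ farthestDist f x :=
  le_ciSup (bddAbove_range_norm_sub hf x) i

theorem farthestDist_nonneg (x : E) : 0 ≤ farthestDist f x :=
  Real.iSup_nonneg fun _ => norm_nonneg _

theorem farthestDist_le [Nonempty ι] {x : E} {R : ℝ} (h : ∀ i, ‖x - f i‖ ≤ R) :
    farthestDist f x ≤ R :=
  ciSup_le h

theorem farthestDist_le_add_dist [Nonempty ι] (hf : IsBounded (range f)) (x y : E) :
    farthestDist f x ≤ farthestDist f y + dist x y :=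
  farthestDist_le fun i => calc
    ‖x - f i‖ ≤ ‖y - f i‖ + ‖x - y‖ := by
      simpa using norm_add_le (y - f i) (x - y)
    _ ≤ farthestDist f y + dist x y := by
      rw [dist_eq_norm]; gcongr; exact norm_sub_le_farthestDist hf y i

theorem lipschitzWith_farthestDist [Nonempty ι] (hf : IsBounded (range f)) :
    LipschitzWith 1 (farthestDist f) :=
  LipschitzWith.of_le_add (farthestDist_le_add_dist hf)

theorem bddBelow_range_farthestDist : BddBelow (range (farthestDist f)) :=
  ⟨0, forall_mem_range.2 farthestDist_nonneg⟩

variable [NormedSpace ℝ E] [UniformConvexSpace E] [Nonempty ι]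

theorem exists_farthestDist_midpoint_le (hf : IsBounded (range f)) {ε : ℝ} (hε : 0 < ε) :
    ∃ δ > 0, ∀ {R : ℝ} {x y : E}, farthestDist f x ≤ R → farthestDist f y ≤ R →
      ε * R ≤ ‖x - y‖ → farthestDist f (midpoint ℝ x y) ≤ (1 - δ / 2) * R := by
  obtain ⟨δ, hδ, hconv⟩ := exists_forall_norm_add_le_two_sub_mul (E := E) hε
  refine ⟨δ, hδ, fun {R x y} hx hy hxy => farthestDist_le fun i => ?_⟩
  have hmid : midpoint ℝ x y - f i = (2 : ℝ)⁻¹ • ((x - f i) + (y - f i)) := by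
    rw [midpoint_eq_smul_add, invOf_eq_inv]; module
  have := hconv ((norm_sub_le_farthestDist hf x i).trans hx)
    ((norm_sub_le_farthestDist hf y i).trans hy) (by rwa [sub_sub_sub_cancel_right])
  rw [hmid, norm_smul, Real.norm_of_nonneg (by norm_num)]
  linarith

theorem hasShrinkingSublevels_farthestDist (hf : IsBounded (range f)) :
    HasShrinkingSublevels (farthestDist f) := by
  intro ε hε
  set m := ⨅ z, farthestDist f z
  have hm : 0 ≤ m := le_ciInf farthestDist_nonneg
  obtain hm | hm := hm.eq_or_lt
  · refine ⟨ε / 3, by positivity, fun x y hx hy => ?_⟩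
    obtain ⟨i⟩ := ‹Nonempty ι›
    have hxi := norm_sub_le_farthestDist hf x i
    have hyi := norm_sub_le_farthestDist hf y i
    calc dist x y ≤ ‖x - f i‖ + ‖y - f i‖ := by
          simpa [dist_eq_norm, norm_sub_rev (f i)] using
            norm_sub_le_norm_sub_add_norm_sub x (f i) y
      _ < ε := by linarith
  obtain ⟨δ, hδ, hmid⟩ :=
    exists_farthestDist_midpoint_le hf (div_pos hε (by linarith : 0 < m + 1))
  -- chosen so that `(1 - δ / 2) * (m + θ) < m`: a midpoint would then beat the infimum
  set θ := min 1 (δ / 2 * m)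
  have hθ : 0 < θ := by positivity
  have hθ₁ : θ ≤ 1 := min_le_left _ _
  have hθδ : θ ≤ δ / 2 * m := min_le_right _ _
  refine ⟨θ, hθ, fun x y hx hy => ?_⟩
  by_contra! hxy
  have hsep : ε / (m + 1) * (m + θ) ≤ ‖x - y‖ := by
    rw [← dist_eq_norm]
    calc ε / (m + 1) * (m + θ) ≤ ε / (m + 1) * (m + 1) := by gcongr
      _ = ε := div_mul_cancel₀ ε (by positivity)
      _ ≤ dist x y := hxy
  have hlow := ciInf_le (bddBelow_range_farthestDist (f := f)) (midpoint ℝ x y)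
  have hup := hmid hx hy hsep
  nlinarith

end FarthestDist

theorem farthestDist_orbit_apply {𝕜 E G : Type*} [Semiring 𝕜] [SeminormedAddCommGroup E]
    [Module 𝕜 E] [Group G] (ρ : G →* (E ≃ₗᵢ[𝕜] E)) (ξ x : E) (g : G) :
    farthestDist (fun h => ρ h ξ) (ρ g x) = farthestDist (fun h => ρ h ξ) x := by
  unfold farthestDist
  rw [← (Equiv.mulLeft g).iSup_comp]
  congr! 2 with h
  dsimp only [Equiv.coe_mulLeft]
  rw [map_mul, LinearIsometryEquiv.coe_mul, Function.comp_apply, ← map_sub,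
    LinearIsometryEquiv.norm_map]

/-- Chebyshev-center lemma: if `ρ` is an isometric linear representation of `G` on a
uniformly convex Banach space `B` and some `ξ` satisfies `sup_g ‖ξ − ρ(g)ξ‖ < ‖ξ‖`,
then `B` has a nonzero `ρ(G)`-invariant vector. -/
theorem nonzero_invariant_vector_of_small_orbit
    {B : Type} [NormedAddCommGroup B] [NormedSpace ℝ B] [UniformConvexSpace B]
    [CompleteSpace B]
    {G : Type} [Group G] (ρ : G →* (B ≃ₗᵢ[ℝ] B))
    (ξ : B) (C : ℝ) (hC : C < ‖ξ‖)
    (h : ∀ g : G, ‖ξ - ρ g ξ‖ ≤ C) :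
    ∃ η : B, η ≠ 0 ∧ ∀ g : G, ρ g η = η := by
  set f : G → B := fun g => ρ g ξ
  have hf : IsBounded (range f) := isBounded_iff_forall_norm_le.2
    ⟨‖ξ‖, forall_mem_range.2 fun g => ((ρ g).norm_map ξ).le⟩
  have hshrink : HasShrinkingSublevels (farthestDist f) :=
    hasShrinkingSublevels_farthestDist hf
  obtain ⟨η, hη⟩ := hshrink.exists_forall_le (lipschitzWith_farthestDist hf).continuous
    bddBelow_range_farthestDist
  refine ⟨η, ?_, fun g => ?_⟩
  · rintro rfl
    have h0 : farthestDist f 0 = ‖ξ‖ := by simp [farthestDist, f]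
    linarith [hη ξ, farthestDist_le (f := f) h]
  · exact hshrink.eq_of_forall_le
      (fun z => (farthestDist_orbit_apply ρ ξ η g).trans_le (hη z)) hη
end

section
/- Let Q be a finitely generated (possibly noncommutative, associative, unital) ring and Q₀ ⊆ Q a subring of finite additive index. Then Q₀ contains a two-sided ideal J of Q which has finite additive index in Q (hence in Q₀). -/
/-!
Let `K = {t | t Q ⊆ Q₀}` be the largest right ideal of `Q` inside `Q₀`, and `J = {x | Q x ⊆ K}`
the largest left ideal inside `K`; `J` is two-sided because `K` is a right ideal.
Both have finite index because each is an intersection of finitely many distinct finite-index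
subgroups: for `t ∈ Q₀`, whether `t z ∈ Q₀` depends only on the class of `z` modulo `Q₀` (as `Q₀`
is a subring), and whether `q x ∈ K` depends only on the class of `q` modulo `K` (as `K` is a
right ideal).
-/

namespace AddSubgroup

instance finiteIndex_comap {G G' : Type*} [AddGroup G] [AddGroup G'] (H : AddSubgroup G)
    [H.FiniteIndex] (f : G' →+ G) : (H.comap f).FiniteIndex :=
  ⟨by
    rw [index_comap]
    have := H.isFiniteRelIndex_of_finiteIndex (K := f.range)
    exact relIndex_ne_zero⟩

theorem finiteIndex_iInf_of_finite_range {G ι : Type*} [AddGroup G] {H : ι → AddSubgroup G}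
    (hH : ∀ i, (H i).FiniteIndex) (hfin : (Set.range H).Finite) : (⨅ i, H i).FiniteIndex := by
  have : Finite (Set.range H) := hfin
  rw [← sInf_range, sInf_eq_iInf']
  exact finiteIndex_iInf fun ⟨_, i, rfl⟩ => hH i

theorem finite_range_of_eq_of_mk_eq {G β : Type*} [AddGroup G] (S : AddSubgroup G)
    [S.FiniteIndex] {f : G → β} (hf : ∀ a b : G, (a : G ⧸ S) = b → f a = f b) :
    (Set.range f).Finite := by
  refine (Set.finite_range fun a : G ⧸ S => f a.out).subset ?_
  rintro _ ⟨a, rfl⟩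
  exact ⟨a, hf _ _ (QuotientAddGroup.out_eq' _)⟩

variable {R : Type*} [Ring R]

def rightCore (A : AddSubgroup R) : AddSubgroup R :=
  ⨅ z : R, A.comap (AddMonoidHom.mulRight z)

def leftCore (A : AddSubgroup R) : AddSubgroup R :=
  ⨅ q : R, A.comap (AddMonoidHom.mulLeft q)

variable {A : AddSubgroup R}

theorem mem_rightCore {t : R} : t ∈ A.rightCore ↔ ∀ z, t * z ∈ A := by
  simp [rightCore, mem_iInf]

theorem mem_leftCore {x : R} : x ∈ A.leftCore ↔ ∀ q, q * x ∈ A := by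
  simp [leftCore, mem_iInf]

theorem rightCore_le : A.rightCore ≤ A := fun t ht => by
  simpa using mem_rightCore.mp ht 1

theorem leftCore_le : A.leftCore ≤ A := fun x hx => by
  simpa using mem_leftCore.mp hx 1

theorem mul_mem_rightCore {t : R} (ht : t ∈ A.rightCore) (q : R) : t * q ∈ A.rightCore :=
  mem_rightCore.mpr fun z => by simpa [mul_assoc] using mem_rightCore.mp ht (q * z)

theorem mul_mem_leftCore {x : R} (q : R) (hx : x ∈ A.leftCore) : q * x ∈ A.leftCore :=
  mem_leftCore.mpr fun p => by simpa [mul_assoc] using mem_leftCore.mp hx (p * q)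

theorem mul_mem_leftCore_of_mul_mem (hA : ∀ a ∈ A, ∀ q, a * q ∈ A) {x : R}
    (hx : x ∈ A.leftCore) (q : R) : x * q ∈ A.leftCore :=
  mem_leftCore.mpr fun p => by simpa [mul_assoc] using hA _ (mem_leftCore.mp hx p) q

theorem rightCore_eq_iInf_inf (Q₀ : Subring R) :
    Q₀.toAddSubgroup.rightCore =
      ⨅ z : R, Q₀.toAddSubgroup ⊓ Q₀.toAddSubgroup.comap (AddMonoidHom.mulRight z) := by
  ext t
  simp only [mem_rightCore, mem_iInf, mem_inf, mem_comap, AddMonoidHom.coe_mulRight]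
  exact ⟨fun h z => ⟨by simpa using h 1, h z⟩, fun h z => (h z).2⟩

theorem finiteIndex_rightCore (Q₀ : Subring R) [Q₀.toAddSubgroup.FiniteIndex] :
    Q₀.toAddSubgroup.rightCore.FiniteIndex := by
  rw [rightCore_eq_iInf_inf]
  refine finiteIndex_iInf_of_finite_range (fun z => inferInstance)
    (finite_range_of_eq_of_mk_eq Q₀.toAddSubgroup fun z z' hzz' => ?_)
  ext t
  simp only [mem_inf, mem_comap, AddMonoidHom.coe_mulRight, and_congr_right_iff]
  intro ht
  have : t * z - t * z' ∈ Q₀ := by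
    rw [← mul_sub]
    exact Q₀.mul_mem ht (QuotientAddGroup.eq_iff_sub_mem.mp hzz')
  exact ⟨fun h => by simpa using Q₀.sub_mem h this, fun h => by simpa using Q₀.add_mem this h⟩

theorem finiteIndex_leftCore [A.FiniteIndex] (hA : ∀ a ∈ A, ∀ q, a * q ∈ A) :
    A.leftCore.FiniteIndex := by
  refine finiteIndex_iInf_of_finite_range (fun q => A.finiteIndex_comap _)
    (finite_range_of_eq_of_mk_eq A fun q q' hqq' => ?_)
  ext x
  simp only [mem_comap, AddMonoidHom.coe_mulLeft]
  have : q * x - q' * x ∈ A := by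
    rw [← sub_mul]
    exact hA _ (QuotientAddGroup.eq_iff_sub_mem.mp hqq') x
  exact ⟨fun h => by simpa using A.sub_mem h this, fun h => by simpa using A.add_mem this h⟩

end AddSubgroup

theorem lewin_ideal_of_finite_index_subring_general
    {Q : Type} [Ring Q]
    (Q₀ : Subring Q) (hQ₀ : Q₀.toAddSubgroup.index ≠ 0) :
    ∃ J : AddSubgroup Q, (↑J : Set Q) ⊆ (↑Q₀ : Set Q) ∧
      (∀ q : Q, ∀ x ∈ J, q * x ∈ J ∧ x * q ∈ J) ∧ J.index ≠ 0 := by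
  have : Q₀.toAddSubgroup.FiniteIndex := ⟨hQ₀⟩
  have : Q₀.toAddSubgroup.rightCore.FiniteIndex := AddSubgroup.finiteIndex_rightCore Q₀
  have hK : ∀ a ∈ Q₀.toAddSubgroup.rightCore, ∀ q, a * q ∈ Q₀.toAddSubgroup.rightCore :=
    fun _ => AddSubgroup.mul_mem_rightCore
  exact ⟨Q₀.toAddSubgroup.rightCore.leftCore,
    AddSubgroup.leftCore_le.trans AddSubgroup.rightCore_le,
    fun q _ hx => ⟨AddSubgroup.mul_mem_leftCore q hx,
      AddSubgroup.mul_mem_leftCore_of_mul_mem hK hx q⟩,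
    (AddSubgroup.finiteIndex_leftCore hK).index_ne_zero⟩

/-- Lewin's lemma: in a finitely generated (possibly noncommutative) unital ring `Q`,
every subring `Q₀` of finite additive index contains a two-sided ideal of `Q` of finite
additive index. -/
theorem lewin_ideal_of_finite_index_subring
    {Q : Type} [Ring Q]
    (hfg : ∃ s : Finset Q, Subring.closure (↑s : Set Q) = ⊤)
    (Q₀ : Subring Q) (hQ₀ : Q₀.toAddSubgroup.index ≠ 0) :
    ∃ J : AddSubgroup Q, (↑J : Set Q) ⊆ (↑Q₀ : Set Q) ∧
      (∀ q : Q, ∀ x ∈ J, q * x ∈ J ∧ x * q ∈ J) ∧ J.index ≠ 0 :=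
  lewin_ideal_of_finite_index_subring_general Q₀ hQ₀
end

section
/- Let m ≥ 3 and let R be a finitely generated ring with a finite generating set, and let G = E_m(R). Then every elementary matrix E_{i,j}(r) is a distorted element of G, i.e. lim_{n→∞} |E_{i,j}(r)ⁿ|_S / n = 0 for a finite generating set S of E_m(R). -/
open Matrix Filter
open scoped commutatorElement

/-- Word length of `g` with respect to a (symmetrized) generating set `S`. -/
noncomputable def wordLength {G : Type} [Group G] (S : Set G) (g : G) : ℕ :=
  sInf {n | ∃ l : List G, l.length = n ∧ (∀ x ∈ l, x ∈ S ∪ S⁻¹) ∧ l.prod = g}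

/-- The elementary group `E_m(R)`: the subgroup of `GL_m(R)` generated by the elementary
matrices `E_{i,j}(r) = I + r·e_{i,j}`. -/
def elemGroup (m : ℕ) (R : Type) [Ring R] : Subgroup (Matrix (Fin m) (Fin m) R)ˣ :=
  Subgroup.closure {g : (Matrix (Fin m) (Fin m) R)ˣ |
    ∃ (i j : Fin m) (r : R), i ≠ j ∧
      g.val = 1 + Matrix.single i j r}

section WLAux
variable {G : Type} [Group G] {S : Set G}

lemma exists_word_aux (hS : Subgroup.closure S = ⊤) (g : G) :
    ∃ l : List G, (∀ x ∈ l, x ∈ S ∪ S⁻¹) ∧ l.prod = g := by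
  have hg : g ∈ Subgroup.closure S := hS ▸ Subgroup.mem_top g
  induction hg using Subgroup.closure_induction with
  | mem x hx => exact ⟨[x], by simp [hx]⟩
  | one => exact ⟨[], by simp⟩
  | mul x y _ _ hx hy =>
      obtain ⟨l1, h1, p1⟩ := hx
      obtain ⟨l2, h2, p2⟩ := hy
      exact ⟨l1 ++ l2, by
        constructor
        · intro z hz; rcases List.mem_append.1 hz with h | h
          exacts [h1 z h, h2 z h]
        · simp [p1, p2]⟩
  | inv x _ hx =>
      obtain ⟨l, h1, p1⟩ := hx
      refine ⟨(l.map (·⁻¹)).reverse, ?_, ?_⟩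
      · intro z hz
        simp only [List.mem_reverse, List.mem_map] at hz
        obtain ⟨y, hy, rfl⟩ := hz
        rcases h1 y hy with h | h
        · exact Or.inr (by simpa using h)
        · exact Or.inl (by simpa using h)
      · rw [List.prod_reverse_noncomm, List.map_map]
        simp [← p1]

lemma wordLength_le_aux {g : G} {n : ℕ} (l : List G) (hl : l.length = n)
    (hm : ∀ x ∈ l, x ∈ S ∪ S⁻¹) (hp : l.prod = g) : wordLength S g ≤ n :=
  Nat.sInf_le ⟨l, hl, hm, hp⟩

lemma exists_word_min_aux (hS : Subgroup.closure S = ⊤) (g : G) :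
    ∃ l : List G, l.length = wordLength S g ∧ (∀ x ∈ l, x ∈ S ∪ S⁻¹) ∧ l.prod = g := by
  obtain ⟨l, h1, h2⟩ := exists_word_aux hS g
  have : wordLength S g ∈
      {n | ∃ l : List G, l.length = n ∧ (∀ x ∈ l, x ∈ S ∪ S⁻¹) ∧ l.prod = g} :=
    Nat.sInf_mem ⟨l.length, l, rfl, h1, h2⟩
  exact this

lemma wordLength_mul_le_aux (hS : Subgroup.closure S = ⊤) (a b : G) :
    wordLength S (a * b) ≤ wordLength S a + wordLength S b := by
  obtain ⟨l1, hl1, hm1, hp1⟩ := exists_word_min_aux hS a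
  obtain ⟨l2, hl2, hm2, hp2⟩ := exists_word_min_aux hS b
  refine wordLength_le_aux (l1 ++ l2) (by simp [hl1, hl2]) ?_ (by simp [hp1, hp2])
  intro z hz; rcases List.mem_append.1 hz with h | h
  exacts [hm1 z h, hm2 z h]

lemma wordLength_inv_le_aux (hS : Subgroup.closure S = ⊤) (a : G) :
    wordLength S a⁻¹ ≤ wordLength S a := by
  obtain ⟨l, hl, hm, hp⟩ := exists_word_min_aux hS a
  refine wordLength_le_aux ((l.map (·⁻¹)).reverse) (by simp [hl]) ?_ ?_
  · intro z hz
    simp only [List.mem_reverse, List.mem_map] at hz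
    obtain ⟨y, hy, rfl⟩ := hz
    rcases hm y hy with h | h
    · exact Or.inr (by simpa using h)
    · exact Or.inl (by simpa using h)
  · rw [List.prod_reverse_noncomm, List.map_map]; simp [← hp]

lemma wordLength_comm_le_aux (hS : Subgroup.closure S = ⊤) (a b : G) :
    wordLength S ⁅a, b⁆ ≤ 2 * wordLength S a + 2 * wordLength S b := by
  rw [commutatorElement_def]
  calc wordLength S (a * b * a⁻¹ * b⁻¹)
      ≤ wordLength S (a * b * a⁻¹) + wordLength S b⁻¹ := wordLength_mul_le_aux hS _ _
    _ ≤ wordLength S (a * b) + wordLength S a⁻¹ + wordLength S b⁻¹ :=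
        add_le_add_left (wordLength_mul_le_aux hS _ _) _
    _ ≤ wordLength S a + wordLength S b + wordLength S a⁻¹ + wordLength S b⁻¹ :=
        add_le_add_left (add_le_add_left (wordLength_mul_le_aux hS _ _) _) _
    _ ≤ _ := by
        have h1 := wordLength_inv_le_aux hS a
        have h2 := wordLength_inv_le_aux hS b
        omega

lemma wordLength_pow_le_aux (hS : Subgroup.closure S = ⊤) (a : G) (n : ℕ) :
    wordLength S (a ^ n) ≤ n * wordLength S a := by
  induction n with
  | zero => simpa using wordLength_le_aux (S := S) [] rfl (by simp) (by simp)
  | succ k ih =>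
      calc wordLength S (a ^ (k+1)) = wordLength S (a ^ k * a) := by rw [pow_succ]
        _ ≤ wordLength S (a ^ k) + wordLength S a := wordLength_mul_le_aux hS _ _
        _ ≤ k * wordLength S a + wordLength S a := add_le_add_left ih _
        _ = (k+1) * wordLength S a := by ring
end WLAux

section ElemAux
variable {m : ℕ} {R : Type} [Ring R]

lemma elem_mul_aux {p q : Fin m} (h : p ≠ q) (t s : R) :
    (1 + single p q t) * (1 + single p q s) =
      1 + single p q (t + s) := by
  have h0 : single p q t * single p q s = 0 :=
    single_mul_single_of_ne (c := t) (i := p) (j := q) (h := h.symm) (d := s)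
  rw [single_add]
  noncomm_ring [h0]

def Eu {m : ℕ} {R : Type} [Ring R] {p q : Fin m} (h : p ≠ q) (t : R) :
    (Matrix (Fin m) (Fin m) R)ˣ where
  val := 1 + single p q t
  inv := 1 + single p q (-t)
  val_inv := by rw [elem_mul_aux h]; simp
  inv_val := by rw [elem_mul_aux h]; simp

lemma Eu_mem {p q : Fin m} (h : p ≠ q) (t : R) : Eu h t ∈ elemGroup m R :=
  Subgroup.subset_closure ⟨p, q, t, h, rfl⟩

def EE {p q : Fin m} (h : p ≠ q) (t : R) : ↥(elemGroup m R) := ⟨Eu h t, Eu_mem h t⟩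

lemma EE_mul {p q : Fin m} (h : p ≠ q) (t s : R) :
    EE h t * EE h s = EE h (t + s) :=
  Subtype.ext (Units.ext (elem_mul_aux h t s))

lemma EE_pow {p q : Fin m} (h : p ≠ q) (t : R) (n : ℕ) :
    EE h t ^ n = EE h (n • t) := by
  induction n with
  | zero =>
      refine Subtype.ext (Units.ext ?_)
      show (1 : Matrix (Fin m) (Fin m) R) = 1 + single p q ((0:ℕ) • t)
      simp
  | succ k ih => rw [pow_succ, ih, EE_mul, succ_nsmul]

lemma stdBasisMatrix_neg' (a b : Fin m) (c : R) :
    single a b (-c) = -single a b c := by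
  ext x y
  by_cases hx : a = x <;> by_cases hy : b = y <;> simp [Matrix.single, hx, hy]

lemma EE_comm {p q l : Fin m} (hpl : p ≠ l) (hlq : l ≠ q) (hpq : p ≠ q)
    (t s : R) : ⁅EE hpl t, EE hlq s⁆ = EE hpq (t * s) := by
  refine Subtype.ext (Units.ext ?_)
  show (1 + single p l t) * (1 + single l q s) *
      (1 + single p l (-t)) * (1 + single l q (-s))
      = 1 + single p q (t * s)
  have hAB : ∀ a b : R, single p l a * single l q b =
      single p q (a * b) := fun a b => single_mul_single_same (c := a) (i := p) (j := l) (k := q) (d := b)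
  have hAA : ∀ a b : R, single p l a * single p l b = 0 :=
    fun a b => single_mul_single_of_ne (c := a) (i := p) (j := l) (h := hpl.symm) (d := b)
  have hBB : ∀ a b : R, single l q a * single l q b = 0 :=
    fun a b => single_mul_single_of_ne (c := a) (i := l) (j := q) (h := hlq.symm) (d := b)
  have hBA : ∀ a b : R, single l q a * single p l b = 0 :=
    fun a b => single_mul_single_of_ne (c := a) (i := l) (j := q) (h := hpq.symm) (d := b)
  have hCA : ∀ a b : R, single p q a * single p l b = 0 :=
    fun a b => single_mul_single_of_ne (c := a) (i := p) (j := q) (h := hpq.symm) (d := b)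
  have hCB : ∀ a b : R, single p q a * single l q b = 0 :=
    fun a b => single_mul_single_of_ne (c := a) (i := p) (j := q) (h := hlq.symm) (d := b)
  have hAC : ∀ a b : R, single p l a * single p q b = 0 :=
    fun a b => single_mul_single_of_ne (c := a) (i := p) (j := l) (h := hpl.symm) (d := b)
  have hBC : ∀ a b : R, single l q a * single p q b = 0 :=
    fun a b => single_mul_single_of_ne (c := a) (i := l) (j := q) (h := hpq.symm) (d := b)
  have hCC : ∀ a b : R, single p q a * single p q b = 0 :=
    fun a b => single_mul_single_of_ne (c := a) (i := p) (j := q) (h := hpq.symm) (d := b)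
  simp only [stdBasisMatrix_neg', mul_add, add_mul, one_mul, mul_one, mul_neg, neg_mul,
    neg_neg, hAB, hAA, hBB, hBA, hCA, hCB, hAC, hBC, hCC, neg_zero, add_zero, zero_add]
  abel
end ElemAux

lemma sqrt_tendsto_aux : Tendsto (fun n : ℕ => ((Nat.sqrt n : ℝ) + 1) / n) atTop (nhds 0) := by
  have hsq : Tendsto Nat.sqrt atTop atTop :=
    tendsto_atTop_atTop.2 fun b => ⟨b * b, fun n hn => Nat.le_sqrt.2 hn⟩
  have hs : Tendsto (fun n : ℕ => (Nat.sqrt n : ℝ)) atTop atTop :=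
    tendsto_natCast_atTop_atTop.comp hsq
  have t1 : Tendsto (fun n : ℕ => (1 : ℝ) / n) atTop (nhds 0) :=
    tendsto_one_div_atTop_nhds_zero_nat
  have t2 : Tendsto (fun n : ℕ => (Nat.sqrt n : ℝ) / n) atTop (nhds 0) := by
    have hub : Tendsto (fun n : ℕ => 1 / (Nat.sqrt n : ℝ)) atTop (nhds 0) :=
      tendsto_inv_atTop_zero.comp hs |>.congr (fun n => (one_div _).symm)
    refine tendsto_of_tendsto_of_tendsto_of_le_of_le' tendsto_const_nhds hub ?_ ?_
    · filter_upwards [eventually_ge_atTop 1] with n hn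
      positivity
    · filter_upwards [eventually_ge_atTop 1] with n hn
      have h1 : (0:ℝ) < Nat.sqrt n := by
        have : 1 ≤ Nat.sqrt n := Nat.sqrt_pos.2 hn
        exact_mod_cast this
      have h2 : (0:ℝ) < n := by exact_mod_cast hn
      rw [div_le_div_iff₀ h2 h1, one_mul]
      have := Nat.sqrt_le' n; rw [pow_two] at this; exact_mod_cast this
  have h := t2.add t1
  simp only [add_zero] at h
  refine h.congr fun n => ?_
  rw [add_div]

/-- In `E_m(R)` with `m ≥ 3` and `R` a finitely generated ring, every elementary matrix
`E_{i,j}(r)` is a distorted element: `|E_{i,j}(r)ⁿ|_S / n → 0` for any finite generating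
set `S` of `E_m(R)`. -/
theorem elementary_matrices_distorted
    {R : Type} [Ring R] (hR : ∃ s : Finset R, Subring.closure (↑s : Set R) = ⊤)
    {m : ℕ} (hm : 3 ≤ m)
    (S : Finset ↥(elemGroup m R))
    (hS : Subgroup.closure (↑S : Set ↥(elemGroup m R)) = ⊤)
    (g : ↥(elemGroup m R)) (i j : Fin m) (hij : i ≠ j) (r : R)
    (hg : (g.val.val : Matrix (Fin m) (Fin m) R) =
      1 + Matrix.single i j r) :
    Tendsto (fun n : ℕ => (wordLength (↑S : Set ↥(elemGroup m R)) (g ^ n) : ℝ) / n)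
      atTop (nhds 0) := by
  classical
  set Sg : Set ↥(elemGroup m R) := (↑S : Set ↥(elemGroup m R)) with hSg
  -- identify g with EE hij r
  have hgE : g = EE hij r := Subtype.ext (Units.ext hg)
  -- find a third index
  obtain ⟨l, hl⟩ : ∃ l : Fin m, l ∉ ({i, j} : Finset (Fin m)) := by
    by_contra h
    push_neg at h
    have hsub : (Finset.univ : Finset (Fin m)) ⊆ {i, j} := fun x _ => h x
    have hcard := Finset.card_le_card hsub
    have h2 : ({i, j} : Finset (Fin m)).card ≤ 2 :=
      le_trans (Finset.card_insert_le _ _) (by simp)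
    simp [Finset.card_univ] at hcard
    omega
  simp only [Finset.mem_insert, Finset.mem_singleton, not_or] at hl
  have hli : l ≠ i := hl.1
  have hlj : l ≠ j := hl.2
  have hil : i ≠ l := hli.symm
  have hjl : j ≠ l := hlj.symm
  -- constants
  set K1 : ℕ := wordLength Sg (EE hij (1:R)) with hK1
  set K2 : ℕ := wordLength Sg (EE hjl (1:R)) with hK2
  set K3 : ℕ := wordLength Sg (EE hil (1:R)) with hK3
  set C0 : ℕ := wordLength Sg (EE hlj r) with hC0
  set C : ℕ := 4*K1 + 12*K2 + 2*K3 + 2*C0 + 1 with hC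
  -- key bound
  have key : ∀ n : ℕ, 1 ≤ n → wordLength Sg (g ^ n) ≤ C * (Nat.sqrt n + 1) := by
    intro n hn
    set a : ℕ := Nat.sqrt n with ha
    have hapos : 1 ≤ a := Nat.sqrt_pos.2 hn
    set q' : ℕ := n / a with hq'
    set b : ℕ := n % a with hb
    have hdm : a * q' + b = n := Nat.div_add_mod n a
    have hqle : q' ≤ a + 2 := by
      have hlt : n < a * a + 3 * a := by
        have := Nat.lt_succ_sqrt n
        nlinarith [Nat.lt_succ_sqrt n]
      have : q' < a + 3 := by
        rw [hq', Nat.div_lt_iff_lt_mul hapos]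
        nlinarith
      omega
    have hble : b ≤ a := le_of_lt (Nat.mod_lt _ hapos)
    -- g ^ n = ⁅EE hil (n:R), EE hlj r⁆
    have hpow : g ^ n = ⁅EE hil ((n : R)), EE hlj r⁆ := by
      rw [hgE, EE_pow, EE_comm hil hlj hij]
      congr 1
      rw [nsmul_eq_mul]
    -- split EE hil (n:R)
    have hsplit : EE hil ((n : R)) =
        ⁅EE hij ((a : R)), EE hjl ((q' : R))⁆ * EE hil ((b : R)) := by
      rw [EE_comm hij hjl hil, EE_mul]
      congr 1
      rw [← hdm]
      push_cast
      ring
    -- word length bounds for the integer pieces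
    have hb1 : wordLength Sg (EE hij ((a : R))) ≤ a * K1 := by
      have : EE hij ((a : R)) = EE hij (1:R) ^ a := by
        rw [EE_pow]; congr 1; simp
      rw [this]; exact wordLength_pow_le_aux hS _ _
    have hb2 : wordLength Sg (EE hjl ((q' : R))) ≤ q' * K2 := by
      have : EE hjl ((q' : R)) = EE hjl (1:R) ^ q' := by
        rw [EE_pow]; congr 1; simp
      rw [this]; exact wordLength_pow_le_aux hS _ _
    have hb3 : wordLength Sg (EE hil ((b : R))) ≤ b * K3 := by
      have : EE hil ((b : R)) = EE hil (1:R) ^ b := by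
        rw [EE_pow]; congr 1; simp
      rw [this]; exact wordLength_pow_le_aux hS _ _
    have hmid : wordLength Sg (EE hil ((n : R))) ≤ 2*(a*K1) + 2*(q'*K2) + b*K3 := by
      rw [hsplit]
      calc wordLength Sg (⁅EE hij ((a : R)), EE hjl ((q' : R))⁆ * EE hil ((b : R)))
          ≤ wordLength Sg ⁅EE hij ((a : R)), EE hjl ((q' : R))⁆ +
              wordLength Sg (EE hil ((b : R))) := wordLength_mul_le_aux hS _ _
        _ ≤ 2 * wordLength Sg (EE hij ((a : R))) + 2 * wordLength Sg (EE hjl ((q' : R))) +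
              wordLength Sg (EE hil ((b : R))) :=
            add_le_add_left (wordLength_comm_le_aux hS _ _) _
        _ ≤ _ := by
            have := hb1; have := hb2; have := hb3
            omega
    have hfinal : wordLength Sg (g ^ n) ≤
        2 * (2*(a*K1) + 2*(q'*K2) + b*K3) + 2 * C0 := by
      rw [hpow]
      calc wordLength Sg ⁅EE hil ((n : R)), EE hlj r⁆
          ≤ 2 * wordLength Sg (EE hil ((n : R))) + 2 * wordLength Sg (EE hlj r) :=
            wordLength_comm_le_aux hS _ _
        _ ≤ _ := by
            have := hmid
            omega
    calc wordLength Sg (g ^ n) ≤ 2 * (2*(a*K1) + 2*(q'*K2) + b*K3) + 2 * C0 := hfinal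
      _ ≤ C * (a + 1) := by
          rw [hC]
          nlinarith [hqle, hble, hapos]
  -- conclude by squeezing
  have hCb : Tendsto (fun n : ℕ => (C : ℝ) * (((Nat.sqrt n : ℝ) + 1) / n)) atTop (nhds 0) := by
    simpa using sqrt_tendsto_aux.const_mul (C : ℝ)
  refine tendsto_of_tendsto_of_tendsto_of_le_of_le' tendsto_const_nhds hCb ?_ ?_
  · filter_upwards [eventually_ge_atTop 1] with n hn
    positivity
  · filter_upwards [eventually_ge_atTop 1] with n hn
    have hnp : (0:ℝ) < n := by exact_mod_cast hn
    have hk := key n hn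
    have hkR : (wordLength Sg (g ^ n) : ℝ) ≤ (C : ℝ) * ((Nat.sqrt n : ℝ) + 1) := by
      exact_mod_cast hk
    calc (wordLength Sg (g ^ n) : ℝ) / n ≤ ((C : ℝ) * ((Nat.sqrt n : ℝ) + 1)) / n := by
          gcongr
      _ = (C : ℝ) * (((Nat.sqrt n : ℝ) + 1) / n) := by ring
end

section
/- Let R be a unital ring, m ≥ 3, and n ∈ ℤ. In E_m(R) with its natural finite-index-free setting, the element E_{1,2}(n) (n ∈ ℤ acting via n·1_R) can be written as a word in the generators {E_{i,j}(±1) : i ≠ j} of length at most C·(1 + log₂(1 + |n|)) for some constant C depending only on m. -/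
/-!
Write `u(z, x) = 1 + z e₀₁ + x e₀₂`. Conjugation by `g = E₁₂(-1) E₂₁(-1)` acts on these
matrices through `(z, x) ↦ (z + x, z + 2x)`, whose `l`-th power sends `(0, 1)` to
`(F₂ₗ, F₂ₗ₊₁)`, and `F₂ₗ₊₁ ≥ 2ˡ`. Nesting `K` such conjugations in Horner's
scheme, with digits `cₗ ∈ {-2, …, 2}` inserted as powers of `E₀₂(±1)`, produces
`u(z, Σ cₗ F₂ₗ₊₁)` from `O(K)` generators; greedy digits reach every `|n| < F₂ₖ₊₁`, because
`F₂ₗ₊₃ ≤ 3 F₂ₗ₊₁`. The first coordinate `z` is not controlled, but the commutator of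
`u(z, x)` with `E₂₁(1)` is `E₀₁(x)`. All of this happens over `ℤ`, and is transported to an
arbitrary ring along `ℤ → R`.
-/

open Finset Matrix

theorem Nat.exists_digits_of_lt {s : ℕ → ℕ} {D : ℕ} (h0 : s 0 = 1)
    (hs : ∀ k, s (k + 1) ≤ (D + 1) * s k) {K n : ℕ} (hn : n < s K) :
    ∃ c : ℕ → ℕ, (∀ l, c l ≤ D) ∧ ∑ l ∈ range K, c l * s l = n := by
  induction K generalizing n with
  | zero => exact ⟨0, fun _ => Nat.zero_le _, by simp_all⟩
  | succ K ih =>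
    have hsK : 0 < s K := Nat.pos_of_ne_zero fun h => by simpa [h] using hn.trans_le (hs K)
    obtain ⟨c, hcD, hc⟩ := ih (Nat.mod_lt n hsK)
    refine ⟨Function.update c K (n / s K), fun l => ?_, ?_⟩
    · by_cases hl : l = K
      · rw [hl, Function.update_self]
        exact Nat.lt_succ_iff.mp ((Nat.div_lt_iff_lt_mul hsK).mpr (hn.trans_le (hs K)))
      · rw [Function.update_of_ne hl]
        exact hcD l
    · rw [sum_range_succ, Function.update_self,
        sum_congr rfl fun l hl => by rw [Function.update_of_ne (mem_range.mp hl).ne], hc,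
        Nat.mod_add_div']

theorem Int.exists_digits_of_natAbs_lt {s : ℕ → ℕ} {D : ℕ} (h0 : s 0 = 1)
    (hs : ∀ k, s (k + 1) ≤ (D + 1) * s k) {K : ℕ} {n : ℤ} (hn : n.natAbs < s K) :
    ∃ c : ℕ → ℤ, (∀ l, (c l).natAbs ≤ D) ∧ ∑ l ∈ Finset.range K, c l * s l = n := by
  obtain ⟨c, hcD, hc⟩ := Nat.exists_digits_of_lt h0 hs hn
  have hc' : ∑ l ∈ Finset.range K, (c l : ℤ) * s l = n.natAbs := by exact_mod_cast hc
  rcases Int.natAbs_eq n with hsign | hsign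
  · exact ⟨fun l => c l, by simpa using hcD, hc'.trans hsign.symm⟩
  · refine ⟨fun l => -(c l : ℤ), by simpa using hcD, ?_⟩
    rw [hsign]
    simp only [neg_mul, sum_neg_distrib, hc']

theorem Nat.fib_two_mul_add_three_le (k : ℕ) : fib (2 * (k + 1) + 1) ≤ 3 * fib (2 * k + 1) := by
  have := fib_mono (show 2 * k ≤ 2 * k + 1 by omega)
  rw [show 2 * (k + 1) + 1 = 2 * k + 1 + 2 by ring, fib_add_two, fib_add_two]
  omega

theorem Nat.two_pow_le_fib_two_mul_add_one (k : ℕ) : 2 ^ k ≤ fib (2 * k + 1) := by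
  induction k with
  | zero => simp
  | succ k ih =>
    rw [show 2 * (k + 1) + 1 = 2 * k + 1 + 2 by ring, fib_add_two, fib_add_two, pow_succ]
    omega

theorem Nat.log_natAbs_le_logb (n : ℤ) :
    (Nat.log 2 n.natAbs : ℝ) ≤ Real.logb 2 (1 + |(n : ℝ)|) :=
  calc (Nat.log 2 n.natAbs : ℝ) ≤ Nat.log 2 (1 + n.natAbs) := by
        exact_mod_cast Nat.log_mono_right (by omega)
    _ ≤ Real.logb 2 ((1 + n.natAbs : ℕ) : ℝ) := Real.natLog_le_logb _ _
    _ = Real.logb 2 (1 + |(n : ℝ)|) := by push_cast; rw [Nat.cast_natAbs, Int.cast_abs]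

theorem RingHom.mapMatrix_transvection {ι R S : Type*} [Fintype ι] [DecidableEq ι] [CommRing R]
    [Ring S] (f : R →+* S) (i j : ι) (c : R) :
    f.mapMatrix (transvection i j c) = 1 + single i j (f c) := by
  rw [transvection, map_add, map_one, RingHom.mapMatrix_apply, map_single _ _ _ f]

namespace Matrix

variable {ι : Type*} [DecidableEq ι] {i j k : ι}

section Identities

variable [Fintype ι] {R : Type*} [CommRing R]

theorem transvection_pow (hij : i ≠ j) (c : R) (N : ℕ) :
    transvection i j c ^ N = transvection i j (N * c) := by
  induction N with
  | zero => simp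
  | succ N ih =>
    rw [pow_succ, ih, transvection_mul_transvection_same _ _ hij, Nat.cast_succ, add_one_mul]

def rowTransvection (i j k : ι) (z x : R) : Matrix ι ι R :=
  transvection i j z * transvection i k x

/-- On the indices `j, k` this is `!![2, -1; -1, 1]`, the inverse of the cat map
`!![1, 1; 1, 2]`. -/
def catMap (j k : ι) : Matrix ι ι R := transvection j k (-1) * transvection k j (-1)

def catMapInv (j k : ι) : Matrix ι ι R := transvection k j 1 * transvection j k 1

theorem catMap_mul_catMapInv (hjk : j ≠ k) : catMap j k * catMapInv j k = (1 : Matrix ι ι R) := by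
  rw [catMap, catMapInv, mul_assoc, ← mul_assoc (transvection k j (-1)),
    transvection_mul_transvection_same _ _ hjk.symm, neg_add_cancel, transvection_zero, one_mul,
    transvection_mul_transvection_same _ _ hjk, neg_add_cancel, transvection_zero]

variable (hij : i ≠ j) (hik : i ≠ k) (hjk : j ≠ k)
include hij hik

theorem rowTransvection_mul_rowTransvection (z x z' x' : R) :
    rowTransvection i j k z x * rowTransvection i j k z' x' =
      rowTransvection i j k (z + z') (x + x') := by
  ext a b
  simp [rowTransvection, transvection, mul_add, add_mul, hij.symm, hik.symm, single_apply]
  split_ifs <;> ring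

include hjk

theorem catMap_mul_rowTransvection (z x : R) :
    catMap j k * rowTransvection i j k z x =
      rowTransvection i j k (z + x) (z + 2 * x) * catMap j k := by
  ext a b
  simp [catMap, rowTransvection, transvection, mul_add, add_mul, hjk, hij.symm, hik.symm,
    hjk.symm, single_apply]
  split_ifs <;> simp_all <;> ring

theorem rowTransvection_commutator (z x : R) :
    rowTransvection i j k z x * transvection k j 1 * rowTransvection i j k (-z) (-x) *
      transvection k j (-1) = transvection i j x := by
  ext a b
  simp [rowTransvection, transvection, mul_add, add_mul, hjk, hij.symm, hik.symm, single_apply]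
  split_ifs <;> simp_all

end Identities

def IsElementaryGenerator (x : Matrix ι ι ℤ) : Prop :=
  ∃ a b, a ≠ b ∧ (x = transvection a b 1 ∨ x = transvection a b (-1))

def transvectionWord (i k : ι) (c : ℤ) : List (Matrix ι ι ℤ) :=
  List.replicate c.natAbs (transvection i k c.sign)

def catMapWord (j k : ι) : List (Matrix ι ι ℤ) := [transvection j k (-1), transvection k j (-1)]

def catMapInvWord (j k : ι) : List (Matrix ι ι ℤ) := [transvection k j 1, transvection j k 1]

def hornerWord (i j k : ι) : (ℕ → ℤ) → ℕ → List (Matrix ι ι ℤ)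
  | _, 0 => []
  | c, K + 1 => transvectionWord i k (c 0) ++ catMapWord j k ++
      hornerWord i j k (fun l => c (l + 1)) K ++ catMapInvWord j k

def commutatorWord (i j k : ι) (c : ℕ → ℤ) (K : ℕ) : List (Matrix ι ι ℤ) :=
  hornerWord i j k c K ++ [transvection k j 1] ++ hornerWord i j k (-c) K ++
    [transvection k j (-1)]

theorem IsElementaryGenerator.of_mem_transvectionWord (hik : i ≠ k) {c : ℤ} {x : Matrix ι ι ℤ}
    (hx : x ∈ transvectionWord i k c) : IsElementaryGenerator x := by
  obtain ⟨hc, rfl⟩ := List.mem_replicate.mp hx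
  refine ⟨i, k, hik, ?_⟩
  rcases Int.natAbs_eq_iff.mp (Int.natAbs_sign_of_ne_zero (Int.natAbs_ne_zero.mp hc)) with h | h <;>
    simp [h]

theorem IsElementaryGenerator.of_mem_hornerWord (hik : i ≠ k) (hjk : j ≠ k) {c : ℕ → ℤ} {K : ℕ}
    {x : Matrix ι ι ℤ} (hx : x ∈ hornerWord i j k c K) : IsElementaryGenerator x := by
  induction K generalizing c with
  | zero => simp [hornerWord] at hx
  | succ K ih =>
    simp only [hornerWord, catMapWord, catMapInvWord, List.mem_append, List.mem_cons,
      List.not_mem_nil, or_false] at hx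
    rcases hx with ((hx | rfl | rfl) | hx) | rfl | rfl
    · exact .of_mem_transvectionWord hik hx
    · exact ⟨j, k, hjk, .inr rfl⟩
    · exact ⟨k, j, hjk.symm, .inr rfl⟩
    · exact ih hx
    · exact ⟨k, j, hjk.symm, .inl rfl⟩
    · exact ⟨j, k, hjk, .inl rfl⟩

theorem IsElementaryGenerator.of_mem_commutatorWord (hik : i ≠ k) (hjk : j ≠ k) {c : ℕ → ℤ}
    {K : ℕ} {x : Matrix ι ι ℤ} (hx : x ∈ commutatorWord i j k c K) : IsElementaryGenerator x := by
  simp only [commutatorWord, List.mem_append, List.mem_singleton] at hx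
  rcases hx with ((hx | rfl) | hx) | rfl
  · exact .of_mem_hornerWord hik hjk hx
  · exact ⟨k, j, hjk.symm, .inl rfl⟩
  · exact .of_mem_hornerWord hik hjk hx
  · exact ⟨k, j, hjk.symm, .inr rfl⟩

theorem length_hornerWord (i j k : ι) (c : ℕ → ℤ) (K : ℕ) :
    (hornerWord i j k c K).length = ∑ l ∈ range K, ((c l).natAbs + 4) := by
  induction K generalizing c with
  | zero => rfl
  | succ K ih =>
    simp only [hornerWord, List.length_append, ih, sum_range_succ' _ K, transvectionWord,
      List.length_replicate, catMapWord, catMapInvWord, List.length_cons, List.length_nil]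
    omega

theorem length_commutatorWord (i j k : ι) (c : ℕ → ℤ) (K : ℕ) :
    (commutatorWord i j k c K).length = 2 * ∑ l ∈ range K, ((c l).natAbs + 4) + 2 := by
  simp only [commutatorWord, List.length_append, length_hornerWord, Pi.neg_apply,
    Int.natAbs_neg, List.length_singleton]
  ring

section Products

variable [Fintype ι]

theorem prod_transvectionWord (hik : i ≠ k) (c : ℤ) :
    (transvectionWord i k c).prod = transvection i k c := by
  rw [transvectionWord, List.prod_replicate, transvection_pow hik, mul_comm, Int.sign_mul_natAbs]

theorem prod_hornerWord (hij : i ≠ j) (hik : i ≠ k) (hjk : j ≠ k) (c : ℕ → ℤ) (K : ℕ) :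
    (hornerWord i j k c K).prod = rowTransvection i j k
      (∑ l ∈ range K, c l * Nat.fib (2 * l)) (∑ l ∈ range K, c l * Nat.fib (2 * l + 1)) := by
  induction K generalizing c with
  | zero => simp [hornerWord, rowTransvection]
  | succ K ih =>
    have hcat : (catMapWord j k).prod = catMap j k := by simp [catMapWord, catMap]
    have hcatInv : (catMapInvWord j k).prod = catMapInv j k := by
      simp [catMapInvWord, catMapInv]
    have hc0 : transvection i k (c 0) = rowTransvection i j k 0 (c 0) := by
      simp [rowTransvection]
    simp only [hornerWord, List.prod_append, hcat, hcatInv, ih, prod_transvectionWord hik,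
      mul_assoc]
    rw [← mul_assoc (catMap j k), catMap_mul_rowTransvection hij hik hjk, mul_assoc,
      catMap_mul_catMapInv hjk, mul_one, hc0, rowTransvection_mul_rowTransvection hij hik]
    congr 1
    · simp [sum_range_succ' _ K, mul_add, Nat.fib_add_two, sum_add_distrib]
    · simp [sum_range_succ' _ K, mul_add, Nat.fib_add_two, sum_add_distrib]
      ring

theorem prod_commutatorWord (hij : i ≠ j) (hik : i ≠ k) (hjk : j ≠ k) (c : ℕ → ℤ) (K : ℕ) :
    (commutatorWord i j k c K).prod =
      transvection i j (∑ l ∈ range K, c l * Nat.fib (2 * l + 1)) := by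
  simp only [commutatorWord, List.prod_append, List.prod_cons, List.prod_nil, mul_one,
    prod_hornerWord hij hik hjk, Pi.neg_apply, neg_mul, sum_neg_distrib]
  exact rowTransvection_commutator hij hik hjk _ _

theorem exists_word_prod_eq_transvection (hij : i ≠ j) (hik : i ≠ k) (hjk : j ≠ k) (n : ℤ) :
    ∃ w : List (Matrix ι ι ℤ), (∀ x ∈ w, IsElementaryGenerator x) ∧
      w.prod = transvection i j n ∧ w.length ≤ 12 * (Nat.log 2 n.natAbs + 1) + 2 := by
  set K := Nat.log 2 n.natAbs + 1
  have hn : n.natAbs < Nat.fib (2 * K + 1) :=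
    (Nat.lt_pow_succ_log_self one_lt_two _).trans_le (Nat.two_pow_le_fib_two_mul_add_one K)
  obtain ⟨c, hc, hcn⟩ := Int.exists_digits_of_natAbs_lt (s := fun l => Nat.fib (2 * l + 1))
    (by simp) Nat.fib_two_mul_add_three_le hn
  have hsum : ∑ l ∈ range K, ((c l).natAbs + 4) ≤ (range K).card • 6 :=
    sum_le_card_nsmul _ _ _ fun l _ => by have := hc l; omega
  rw [card_range, smul_eq_mul] at hsum
  refine ⟨commutatorWord i j k c K, fun x hx => .of_mem_commutatorWord hik hjk hx,
    by rw [prod_commutatorWord hij hik hjk, hcn], ?_⟩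
  rw [length_commutatorWord]
  omega

end Products

end Matrix

/-- For `m ≥ 3` there is a constant `C` (depending only on `m`) such that in `E_m(R)` for
any unital ring `R`, the element `E_{1,2}(n·1_R)` can be written as a word in the
generators `E_{i,j}(±1)` of length at most `C·(1 + log₂(1 + |n|))`. -/
theorem elementary_integer_word_length_log
    {m : ℕ} (hm : 3 ≤ m) :
    ∃ C : ℝ, ∀ (R : Type) [Ring R], ∀ n : ℤ,
      ∃ l : List (Matrix (Fin m) (Fin m) R),
        (∀ x ∈ l, ∃ i j : Fin m, i ≠ j ∧
          (x = 1 + Matrix.single i j (1 : R) ∨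
            x = 1 + Matrix.single i j (-1 : R))) ∧
        l.prod = 1 + Matrix.single (⟨0, by omega⟩ : Fin m) (⟨1, by omega⟩ : Fin m)
          ((n : R)) ∧
        (l.length : ℝ) ≤ C * (1 + Real.logb 2 (1 + |(n : ℝ)|)) := by
  refine ⟨14, fun R _ n => ?_⟩
  obtain ⟨w, hw, hprod, hlen⟩ := exists_word_prod_eq_transvection (i := (⟨0, by omega⟩ : Fin m))
    (j := ⟨1, by omega⟩) (k := ⟨2, by omega⟩) (by simp [Fin.ext_iff]) (by simp [Fin.ext_iff])
    (by simp [Fin.ext_iff]) n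
  let φ := (Int.castRingHom R).mapMatrix (m := Fin m)
  refine ⟨w.map φ, ?_, ?_, ?_⟩
  · simp only [List.mem_map]
    rintro _ ⟨x, hx, rfl⟩
    obtain ⟨a, b, hab, rfl | rfl⟩ := hw x hx <;> refine ⟨a, b, hab, ?_⟩ <;>
      simp only [φ, RingHom.mapMatrix_transvection, map_one, map_neg, true_or, or_true]
  · rw [← map_list_prod, hprod, RingHom.mapMatrix_transvection, eq_intCast]
  · have hlen' : (w.length : ℝ) ≤ 12 * (Nat.log 2 n.natAbs + 1) + 2 := by exact_mod_cast hlen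
    have hlog := Nat.log_natAbs_le_logb n
    have hlog0 : 0 ≤ Real.logb 2 (1 + |(n : ℝ)|) :=
      Real.logb_nonneg one_lt_two (by linarith [abs_nonneg (n : ℝ)])
    rw [List.length_map]
    linarith
end
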